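/- arXiv:1706.03987 — 6 statements merged into one kernel-verified Lean document; each statement's English description precedes it below -/
import Mathlib

section
/- Every eigenvalue of the adjacency matrix of the Johnson graph J(n,w) (for 0 ≤ w ≤ n) equals (w-i)(n-w-i) - i for some i ∈ {0,...,w}. -/
/-!
Let `M` be the inclusion matrix of `w`-sets versus `(w+1)`-sets of an `n`-set, and `A_w` the
adjacency matrix of `J(n,w)`. Counting common subsets and supersets gives
`Mᵀ M = A_{w+1} + (w+1) I` and `M Mᵀ = A_w + (n-w) I`. As `Mᵀ M` and `M Mᵀ` share their nonzero
eigenvalues, an eigenvalue `μ` of `A_{w+1}` is either `-(w+1)` or satisfies that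
`μ + (w+1) - (n-w)` is an eigenvalue of `A_w`; induction on `w` yields the formula.
-/

open Finset Matrix

theorem Matrix.exists_mulVec_eq_smul_mul_swap {m n K : Type*} [Fintype m] [Fintype n] [Field K]
    (A : Matrix m n K) (B : Matrix n m K) {c : K} (hc : c ≠ 0)
    (h : ∃ f ≠ 0, (B * A) *ᵥ f = c • f) : ∃ g ≠ 0, (A * B) *ᵥ g = c • g := by
  obtain ⟨f, hf, hBAf⟩ := h
  rw [← mulVec_mulVec] at hBAf
  refine ⟨A *ᵥ f, fun hAf => ?_, by rw [← mulVec_mulVec, hBAf, mulVec_smul]⟩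
  rw [hAf, mulVec_zero, eq_comm, smul_eq_zero] at hBAf
  exact hBAf.elim hc hf

namespace Johnson

variable {α : Type*} [DecidableEq α]

theorem card_inter_lt_of_ne {s t : Finset α} (hst : s ≠ t) (h : #s = #t) : #(s ∩ t) < #s :=
  card_lt_card <| ssubset_of_subset_of_ne inter_subset_left fun heq =>
    hst <| eq_of_subset_of_card_le (inter_eq_left.1 heq) h.ge

section

variable (α) (K : Type*) [Zero K] [One K]

def adjMatrix (w : ℕ) : Matrix {s : Finset α // #s = w} {s : Finset α // #s = w} K :=
  of fun x y => if #(x.1 ∩ y.1) + 1 = w then 1 else 0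

def inclusionMatrix (w : ℕ) : Matrix {s : Finset α // #s = w} {s : Finset α // #s = w + 1} K :=
  of fun t s => if t.1 ⊆ s.1 then 1 else 0

end

variable [Fintype α]

theorem card_filter_subset (k : ℕ) (X : Finset α) :
    #{t : {s : Finset α // #s = k} | ↑t ⊆ X} = (#X).choose k := by
  rw [← card_powersetCard]
  refine card_bij (fun t _ => t.1) (fun t ht => ?_) (fun _ _ _ _ h => Subtype.ext h) ?_
  · simp only [mem_filter, mem_univ, true_and] at ht
    exact mem_powersetCard.2 ⟨ht, t.2⟩
  · intro s hs
    obtain ⟨hsX, hs⟩ := mem_powersetCard.1 hs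
    exact ⟨⟨s, hs⟩, by simpa using hsX, rfl⟩

theorem card_filter_superset {k : ℕ} (hk : k ≤ Fintype.card α) (u : Finset α) :
    #{s : {s : Finset α // #s = k} | u ⊆ ↑s} =
      (Fintype.card α - #u).choose (Fintype.card α - k) := by
  have hcompl {j : ℕ} (s : {s : Finset α // #s = j}) : #(s.1ᶜ) = Fintype.card α - j := by
    rw [card_compl, s.2]
  rw [← card_compl, ← card_filter_subset]
  refine card_nbij' (fun s => ⟨s.1ᶜ, hcompl s⟩) (fun t => ⟨t.1ᶜ, by rw [hcompl t]; omega⟩)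
    ?_ ?_ ?_ ?_ <;> intro s <;> simp [subset_compl_comm]

variable {K : Type*} [Field K]

theorem transpose_mul_inclusionMatrix_apply (w : ℕ) (s s' : {s : Finset α // #s = w + 1}) :
    ((inclusionMatrix α K w)ᵀ * inclusionMatrix α K w) s s' = (#(s.1 ∩ s'.1)).choose w := by
  simp only [mul_apply, transpose_apply, inclusionMatrix, of_apply, ite_zero_mul_ite_zero,
    mul_one, ← subset_inter_iff, sum_boole, card_filter_subset]

theorem inclusionMatrix_mul_transpose_apply {w : ℕ} (hw : w < Fintype.card α)
    (t t' : {s : Finset α // #s = w}) :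
    (inclusionMatrix α K w * (inclusionMatrix α K w)ᵀ) t t' =
      (Fintype.card α - #(t.1 ∪ t'.1)).choose (Fintype.card α - (w + 1)) := by
  simp only [mul_apply, transpose_apply, inclusionMatrix, of_apply, ite_zero_mul_ite_zero,
    mul_one, ← union_subset_iff, sum_boole, card_filter_superset hw]

theorem transpose_mul_inclusionMatrix (w : ℕ) :
    (inclusionMatrix α K w)ᵀ * inclusionMatrix α K w = adjMatrix α K (w + 1) + (w + 1 : K) • 1 := by
  ext s s'
  rw [transpose_mul_inclusionMatrix_apply]
  simp only [adjMatrix, Matrix.add_apply, Matrix.smul_apply, one_apply, of_apply, smul_eq_mul]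
  by_cases hss : s = s'
  · subst hss
    simp [s.2, Nat.choose_succ_self_right]
  · have hlt := card_inter_lt_of_ne (Subtype.coe_ne_coe.2 hss) (s.2.trans s'.2.symm)
    rw [s.2] at hlt
    rcases (Nat.lt_succ_iff.1 hlt).lt_or_eq with hlt | heq
    · simp [Nat.choose_eq_zero_of_lt hlt, hss, hlt.ne]
    · simp [heq, hss]

theorem inclusionMatrix_mul_transpose {w : ℕ} (hw : w < Fintype.card α) :
    inclusionMatrix α K w * (inclusionMatrix α K w)ᵀ =
      adjMatrix α K w + ((Fintype.card α : K) - w) • 1 := by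
  ext t t'
  rw [inclusionMatrix_mul_transpose_apply hw]
  simp only [adjMatrix, Matrix.add_apply, Matrix.smul_apply, one_apply, of_apply, smul_eq_mul]
  by_cases htt : t = t'
  · subst htt
    have hsub : Fintype.card α - (w + 1) = Fintype.card α - w - 1 := by omega
    rw [union_self, t.2, hsub, Nat.choose_symm (by omega), Nat.choose_one_right]
    simp [t.2, Nat.cast_sub hw.le]
  · have hlt := card_inter_lt_of_ne (Subtype.coe_ne_coe.2 htt) (t.2.trans t'.2.symm)
    have hunion := card_union_add_card_inter t.1 t'.1
    have hle := card_le_univ (t.1 ∪ t'.1)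
    rw [t.2, t'.2] at hunion
    rw [t.2] at hlt
    by_cases hadj : #(t.1 ∩ t'.1) + 1 = w
    · have : Fintype.card α - #(t.1 ∪ t'.1) = Fintype.card α - (w + 1) := by omega
      simp [this, hadj, htt]
    · have : Fintype.card α - #(t.1 ∪ t'.1) < Fintype.card α - (w + 1) := by omega
      simp [Nat.choose_eq_zero_of_lt this, hadj, htt]

theorem exists_eq_of_adjMatrix_mulVec_eq_smul {w : ℕ} (hw : w ≤ Fintype.card α) {μ : K}
    (h : ∃ f ≠ 0, adjMatrix α K w *ᵥ f = μ • f) :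
    ∃ i ≤ w, μ = ((w : K) - i) * (Fintype.card α - w - i) - i := by
  induction w generalizing μ with
  | zero =>
    obtain ⟨f, hf, hμf⟩ := h
    have hA : adjMatrix α K 0 = 0 := by ext; simp [adjMatrix]
    rw [hA, zero_mulVec, eq_comm, smul_eq_zero] at hμf
    exact ⟨0, le_rfl, by simpa [hf] using hμf⟩
  | succ w ih =>
    obtain ⟨f, hf, hμf⟩ := h
    by_cases hc : μ + (w + 1) = 0
    · exact ⟨w + 1, le_rfl, by push_cast; linear_combination hc⟩
    have hMf : ((inclusionMatrix α K w)ᵀ * inclusionMatrix α K w) *ᵥ f = (μ + (w + 1)) • f := by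
      rw [transpose_mul_inclusionMatrix, add_mulVec, hμf, smul_mulVec, one_mulVec, ← add_smul]
    obtain ⟨g, hg, hMg⟩ := exists_mulVec_eq_smul_mul_swap _ _ hc ⟨f, hf, hMf⟩
    rw [inclusionMatrix_mul_transpose hw, add_mulVec, smul_mulVec, one_mulVec,
      ← eq_sub_iff_add_eq, ← sub_smul] at hMg
    obtain ⟨i, hi, hμ⟩ := ih (by omega) ⟨g, hg, hMg⟩
    exact ⟨i, by omega, by push_cast; linear_combination hμ⟩

end Johnson

/-- Every eigenvalue of the adjacency matrix of the Johnson graph `J(n,w)` equals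
`(w-i)(n-w-i) - i` for some `i ∈ {0,…,w}`. -/
theorem johnson_eigenvalue_form (n w : ℕ) (hwn : w ≤ n) (μ : ℝ)
    (h : ∃ f : {s : Finset (Fin n) // s.card = w} → ℝ, f ≠ 0 ∧
      Matrix.mulVec
        (Matrix.of fun x y : {s : Finset (Fin n) // s.card = w} =>
          if ((x : Finset (Fin n)) ∩ (y : Finset (Fin n))).card + 1 = w then (1 : ℝ) else 0) f
      = μ • f) :
    ∃ i : ℕ, i ≤ w ∧ μ = ((w : ℝ) - i) * ((n : ℝ) - w - i) - i := by
  simpa using Johnson.exists_eq_of_adjMatrix_mulVec_eq_smul (α := Fin n) (K := ℝ)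
    (by simpa using hwn) h
end

section
/- Let i ≤ w ≤ n - i. If f : V(J(n,i)) → ℝ satisfies A f = λ f, where A is the adjacency matrix of J(n,i), then the induced function I^{i,w}(f) on J(n,w), defined by I^{i,w}(f)(x) = Σ_{y ⊆ x, |y| = i} f(y), satisfies A' (I^{i,w}(f)) = (λ + (w-i)(n-i-w)) · I^{i,w}(f), where A' is the adjacency matrix of J(n,w). -/
open Finset


variable {n : ℕ}

private lemma insert_erase_card' {s : Finset (Fin n)} {a b : Fin n}
    (ha : a ∈ s) (hb : b ∉ s) : (insert b (s.erase a)).card = s.card := by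
  have hb' : b ∉ s.erase a := fun h => hb (mem_of_mem_erase h)
  rw [card_insert_of_notMem hb', card_erase_of_mem ha]
  have : 1 ≤ s.card := card_pos.mpr ⟨a, ha⟩
  omega

private lemma inter_insert_erase' {s : Finset (Fin n)} {a b : Fin n}
    (ha : a ∈ s) (hb : b ∉ s) : s ∩ insert b (s.erase a) = s.erase a := by
  ext t
  simp only [mem_inter, mem_insert, mem_erase]
  constructor
  · rintro ⟨hts, rfl | h⟩
    · exact absurd hts hb
    · exact h
  · rintro ⟨hta, hts⟩
    exact ⟨hts, Or.inr ⟨hta, hts⟩⟩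

private lemma nbr_sum {k : ℕ} {s : Finset (Fin n)} (hs : s.card = k)
    (g : Finset (Fin n) → ℝ) :
    ∑ y ∈ univ.filter (fun y : Finset (Fin n) => y.card = k ∧ (s ∩ y).card + 1 = k), g y
      = ∑ a ∈ s, ∑ b ∈ sᶜ, g (insert b (s.erase a)) := by
  rw [← Finset.sum_product']
  symm
  refine Finset.sum_bij (fun p _ => insert p.2 (s.erase p.1)) ?_ ?_ ?_ ?_
  · rintro ⟨a, b⟩ hab
    rw [mem_product, mem_compl] at hab
    obtain ⟨ha, hb⟩ := hab
    simp only [mem_filter, mem_univ, true_and]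
    refine ⟨by rw [insert_erase_card' ha hb, hs], ?_⟩
    rw [inter_insert_erase' ha hb, card_erase_of_mem ha, hs]
    have : 1 ≤ k := hs ▸ card_pos.mpr ⟨a, ha⟩
    omega
  · rintro ⟨a, b⟩ hab ⟨a', b'⟩ hab' h
    rw [mem_product, mem_compl] at hab hab'
    obtain ⟨ha, hb⟩ := hab
    obtain ⟨ha', hb'⟩ := hab'
    have h' : insert b (s.erase a) = insert b' (s.erase a') := h
    have hbb : b = b' := by
      have h1 : b ∈ insert b' (s.erase a') := h' ▸ mem_insert_self b _
      rcases mem_insert.mp h1 with h2 | h2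
      · exact h2
      · exact absurd (mem_of_mem_erase h2) hb
    subst hbb
    have haa : a = a' := by
      by_contra hne
      have h1 : a' ∈ insert b (s.erase a) :=
        mem_insert_of_mem (mem_erase.mpr ⟨fun hh => hne hh.symm, ha'⟩)
      rw [h'] at h1
      rcases mem_insert.mp h1 with h2 | h2
      · exact hb' (h2 ▸ ha')
      · exact notMem_erase a' s h2
    simp [haa]
  · intro y hy
    simp only [mem_filter, mem_univ, true_and] at hy
    obtain ⟨hyc, hyi⟩ := hy
    have h1 : (s \ y).card = 1 := by
      have := card_inter_add_card_sdiff s y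
      omega
    have h2 : (y \ s).card = 1 := by
      have h3 := card_inter_add_card_sdiff y s
      rw [inter_comm] at h3
      omega
    obtain ⟨a, ha⟩ := card_eq_one.mp h1
    obtain ⟨b, hbb⟩ := card_eq_one.mp h2
    have hma : a ∈ s \ y := by rw [ha]; exact mem_singleton_self a
    have hmb : b ∈ y \ s := by rw [hbb]; exact mem_singleton_self b
    rw [mem_sdiff] at hma hmb
    refine ⟨(a, b), by rw [mem_product, mem_compl]; exact ⟨hma.1, hmb.2⟩, ?_⟩
    ext t
    simp only [mem_insert, mem_erase]
    constructor
    · rintro (rfl | ⟨hta, hts⟩)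
      · exact hmb.1
      · by_contra hty
        have : t ∈ s \ y := mem_sdiff.mpr ⟨hts, hty⟩
        rw [ha, mem_singleton] at this
        exact hta this
    · intro hty
      by_cases hts : t ∈ s
      · refine Or.inr ⟨?_, hts⟩
        rintro rfl
        exact hma.2 hty
      · left
        have : t ∈ y \ s := mem_sdiff.mpr ⟨hty, hts⟩
        rw [hbb, mem_singleton] at this
        exact this
  · intro a ha
    rfl

private lemma sum_pc_insert {s : Finset (Fin n)} {b : Fin n} (hb : b ∉ s) (j : ℕ)
    (f : Finset (Fin n) → ℝ) :
    ∑ z ∈ (insert b s).powersetCard (j+1), f z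
      = ∑ z ∈ s.powersetCard (j+1), f z + ∑ z ∈ s.powersetCard j, f (insert b z) := by
  have hdisj : Disjoint (s.powersetCard (j+1)) ((s.powersetCard j).image (insert b)) := by
    rw [disjoint_right]
    rintro z hz hz2
    obtain ⟨z', hz', rfl⟩ := mem_image.mp hz
    rw [mem_powersetCard] at hz2
    exact hb (hz2.1 (mem_insert_self b z'))
  have hinj : ∀ z ∈ s.powersetCard j, ∀ z' ∈ s.powersetCard j,
      insert b z = insert b z' → z = z' := by
    intro z hz z' hz' h
    rw [mem_powersetCard] at hz hz'
    have e1 : z = (insert b z).erase b := (erase_insert (fun hc => hb (hz.1 hc))).symm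
    rw [e1, h, erase_insert (fun hc => hb (hz'.1 hc))]
  rw [powersetCard_succ_insert hb, sum_union hdisj, sum_image hinj]

private lemma sum_erase_pc {s : Finset (Fin n)} {k : ℕ} (hs : s.card = k) (j : ℕ)
    (g : Finset (Fin n) → ℝ) :
    ∑ a ∈ s, ∑ z ∈ (s.erase a).powersetCard j, g z
      = ((k - j : ℕ) : ℝ) * ∑ z ∈ s.powersetCard j, g z := by
  have key : ∀ a ∈ s, (s.erase a).powersetCard j
      = (s.powersetCard j).filter (fun z => a ∉ z) := by
    intro a ha
    ext z
    simp only [mem_powersetCard, mem_filter, subset_erase]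
    tauto
  calc ∑ a ∈ s, ∑ z ∈ (s.erase a).powersetCard j, g z
      = ∑ a ∈ s, ∑ z ∈ (s.powersetCard j).filter (fun z => a ∉ z), g z := by
        exact Finset.sum_congr rfl (fun a ha => by rw [key a ha])
    _ = ∑ a ∈ s, ∑ z ∈ s.powersetCard j, if a ∉ z then g z else 0 := by
        exact Finset.sum_congr rfl (fun a _ => (Finset.sum_filter _ _))
    _ = ∑ z ∈ s.powersetCard j, ∑ a ∈ s, if a ∉ z then g z else 0 := Finset.sum_comm
    _ = ∑ z ∈ s.powersetCard j, ((k - j : ℕ) : ℝ) * g z := by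
        refine Finset.sum_congr rfl (fun z hz => ?_)
        rw [← Finset.sum_filter, Finset.sum_const, ← sdiff_eq_filter]
        rw [mem_powersetCard] at hz
        rw [card_sdiff_of_subset hz.1, hs, hz.2, nsmul_eq_mul]
    _ = ((k - j : ℕ) : ℝ) * ∑ z ∈ s.powersetCard j, g z := by rw [mul_sum]

private lemma pc_erase_swap {x : Finset (Fin n)} (j : ℕ)
    (G : Finset (Fin n) → Fin n → ℝ) :
    ∑ z ∈ x.powersetCard (j+1), ∑ c ∈ z, G (z.erase c) c
      = ∑ z ∈ x.powersetCard j, ∑ c ∈ x \ z, G z c := by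
  rw [Finset.sum_sigma' (x.powersetCard (j+1)) (fun z => z) (fun z c => G (z.erase c) c),
      Finset.sum_sigma' (x.powersetCard j) (fun z => x \ z) (fun z c => G z c)]
  refine Finset.sum_nbij' (fun p => ⟨p.1.erase p.2, p.2⟩) (fun q => ⟨insert q.2 q.1, q.2⟩)
    ?_ ?_ ?_ ?_ ?_
  · rintro ⟨z, c⟩ hp
    rw [mem_sigma] at hp ⊢
    obtain ⟨hz, hc⟩ := hp
    rw [mem_powersetCard] at hz
    refine ⟨mem_powersetCard.mpr ⟨(erase_subset _ _).trans hz.1, ?_⟩, ?_⟩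
    · rw [card_erase_of_mem hc, hz.2]
      omega
    · exact mem_sdiff.mpr ⟨hz.1 hc, notMem_erase c z⟩
  · rintro ⟨z, c⟩ hq
    rw [mem_sigma] at hq ⊢
    obtain ⟨hz, hc⟩ := hq
    rw [mem_powersetCard] at hz
    rw [mem_sdiff] at hc
    refine ⟨mem_powersetCard.mpr ⟨insert_subset hc.1 hz.1, ?_⟩, mem_insert_self c z⟩
    rw [card_insert_of_notMem hc.2, hz.2]
  · rintro ⟨z, c⟩ hp
    rw [mem_sigma] at hp
    exact congrArg (fun t => (⟨t, c⟩ : Σ _ : Finset (Fin n), Fin n)) (insert_erase hp.2)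
  · rintro ⟨z, c⟩ hq
    rw [mem_sigma, mem_sdiff] at hq
    exact congrArg (fun t => (⟨t, c⟩ : Σ _ : Finset (Fin n), Fin n)) (erase_insert hq.2.2)
  · rintro ⟨z, c⟩ _
    rfl

/-- If `f` is a `λ`-eigenfunction of `J(n,i)` and `i ≤ w ≤ n - i`, then the induced
function `I^{i,w}(f)(x) = ∑_{y ⊆ x, |y| = i} f(y)` is a
`(λ + (w-i)(n-i-w))`-eigenfunction of `J(n,w)`. -/
theorem induced_eigenfunction (n i w : ℕ) (hiw : i ≤ w) (hwn : w + i ≤ n) (lam : ℝ)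
    (f : Finset (Fin n) → ℝ)
    (hf : ∀ x : Finset (Fin n), x.card = i →
      ∑ y ∈ univ.filter (fun y : Finset (Fin n) => y.card = i ∧ (x ∩ y).card + 1 = i), f y
        = lam * f x) :
    ∀ x : Finset (Fin n), x.card = w →
      ∑ y ∈ univ.filter (fun y : Finset (Fin n) => y.card = w ∧ (x ∩ y).card + 1 = w),
          (∑ z ∈ y.powersetCard i, f z)
        = (lam + ((w : ℝ) - i) * ((n : ℝ) - i - w)) * ∑ z ∈ x.powersetCard i, f z := by
  intro x hx
  cases i with
  | zero =>
    have h0 : lam * f ∅ = 0 := by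
      have h1 := hf ∅ card_empty
      rw [show (univ.filter (fun y : Finset (Fin n) => y.card = 0 ∧ (∅ ∩ y).card + 1 = 0))
          = (∅ : Finset (Finset (Fin n))) from by ext y; simp, sum_empty] at h1
      linarith
    rw [nbr_sum hx]
    simp only [powersetCard_zero, sum_singleton, sum_const, card_compl,
      Fintype.card_fin, hx, nsmul_eq_mul]
    have hc : ((n - w : ℕ) : ℝ) = (n : ℝ) - w := by
      have h2 : w ≤ n := by omega
      exact Nat.cast_sub h2
    rw [hc]
    push_cast
    linear_combination -h0
  | succ i =>
    -- abbreviations (written out)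
    have hLHS : ∑ y ∈ univ.filter
          (fun y : Finset (Fin n) => y.card = w ∧ (x ∩ y).card + 1 = w),
          ∑ z ∈ y.powersetCard (i+1), f z
        = ((n - w : ℕ) : ℝ) * (((w - (i+1) : ℕ) : ℝ) * ∑ z ∈ x.powersetCard (i+1), f z)
          + ((w - i : ℕ) : ℝ) * ∑ b ∈ xᶜ, ∑ z ∈ x.powersetCard i, f (insert b z) := by
      rw [nbr_sum hx]
      have step1 : ∀ a ∈ x,
          ∑ b ∈ xᶜ, ∑ z ∈ (insert b (x.erase a)).powersetCard (i+1), f z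
            = ∑ b ∈ xᶜ, ((∑ z ∈ (x.erase a).powersetCard (i+1), f z)
                + ∑ z ∈ (x.erase a).powersetCard i, f (insert b z)) := by
        intro a _
        refine Finset.sum_congr rfl (fun b hb => ?_)
        exact sum_pc_insert (fun h => (mem_compl.mp hb) (mem_of_mem_erase h)) _ _
      rw [Finset.sum_congr rfl step1]
      simp only [Finset.sum_add_distrib]
      congr 1
      · simp only [sum_const, card_compl, Fintype.card_fin, hx, nsmul_eq_mul]
        rw [← mul_sum, sum_erase_pc hx (i+1)]
      · rw [Finset.sum_comm]
        rw [Finset.sum_congr rfl (fun b _ => sum_erase_pc hx i (fun z => f (insert b z))),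
          ← mul_sum]
    have hKey : lam * ∑ z ∈ x.powersetCard (i+1), f z
        = ((w - i : ℕ) : ℝ) * (((i:ℝ)+1) * ∑ z ∈ x.powersetCard (i+1), f z)
          - ((i:ℝ)+1) * ∑ z ∈ x.powersetCard (i+1), f z
          + ((w - i : ℕ) : ℝ) * ∑ b ∈ xᶜ, ∑ z ∈ x.powersetCard i, f (insert b z) := by
      have e1 : lam * ∑ z ∈ x.powersetCard (i+1), f z
          = ∑ z ∈ x.powersetCard (i+1), ∑ c ∈ z, ∑ d ∈ zᶜ, f (insert d (z.erase c)) := by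
        rw [mul_sum]
        refine Finset.sum_congr rfl (fun z hz => ?_)
        rw [mem_powersetCard] at hz
        rw [← hf z hz.2, nbr_sum hz.2]
      have e2 : ∀ z ∈ x.powersetCard (i+1), ∀ c ∈ z,
          ∑ d ∈ zᶜ, f (insert d (z.erase c))
            = ((∑ d ∈ x \ (z.erase c), f (insert d (z.erase c))) - f z)
              + ∑ d ∈ xᶜ, f (insert d (z.erase c)) := by
        intro z hz c hc
        rw [mem_powersetCard] at hz
        have hu : zᶜ = (x \ z) ∪ xᶜ := by
          ext t
          simp only [mem_compl, mem_union, mem_sdiff]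
          constructor
          · intro h
            by_cases htx : t ∈ x
            · exact Or.inl ⟨htx, h⟩
            · exact Or.inr htx
          · rintro (⟨_, h⟩ | h)
            · exact h
            · exact fun hc' => h (hz.1 hc')
        have hd : Disjoint (x \ z) xᶜ := by
          rw [disjoint_left]
          intro t ht h2
          exact (mem_compl.mp h2) (mem_sdiff.mp ht).1
        have h1 : x \ z.erase c = insert c (x \ z) := by
          ext t
          simp only [mem_sdiff, mem_erase, mem_insert]
          constructor
          · rintro ⟨htx, h⟩
            by_cases htc : t = c
            · exact Or.inl htc
            · exact Or.inr ⟨htx, fun hz' => h ⟨htc, hz'⟩⟩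
          · rintro (rfl | ⟨htx, htz⟩)
            · exact ⟨hz.1 hc, fun h => h.1 rfl⟩
            · exact ⟨htx, fun h => htz h.2⟩
        rw [hu, sum_union hd, h1,
          sum_insert (fun h => (mem_sdiff.mp h).2 hc), insert_erase hc]
        ring
      rw [e1, Finset.sum_congr rfl (fun z hz => Finset.sum_congr rfl (fun c hc => e2 z hz c hc))]
      simp only [Finset.sum_add_distrib, Finset.sum_sub_distrib]
      have p1 : ∑ z ∈ x.powersetCard (i+1), ∑ c ∈ z,
            ∑ d ∈ x \ (z.erase c), f (insert d (z.erase c))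
          = ∑ z ∈ x.powersetCard i, ∑ c ∈ x \ z, ∑ d ∈ x \ z, f (insert d z) :=
        pc_erase_swap i (fun z' _ => ∑ d ∈ x \ z', f (insert d z'))
      have p3 : ∑ z ∈ x.powersetCard (i+1), ∑ c ∈ z,
            ∑ d ∈ xᶜ, f (insert d (z.erase c))
          = ∑ z ∈ x.powersetCard i, ∑ c ∈ x \ z, ∑ d ∈ xᶜ, f (insert d z) :=
        pc_erase_swap i (fun z' _ => ∑ d ∈ xᶜ, f (insert d z'))
      have q : ∑ z ∈ x.powersetCard i, ∑ d ∈ x \ z, f (insert d z)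
          = ((i:ℝ)+1) * ∑ z ∈ x.powersetCard (i+1), f z := by
        have q1 : ∑ z ∈ x.powersetCard (i+1), ∑ c ∈ z, f (insert c (z.erase c))
            = ∑ z ∈ x.powersetCard i, ∑ c ∈ x \ z, f (insert c z) :=
          pc_erase_swap i (fun z' c => f (insert c z'))
        rw [← q1]
        rw [Finset.sum_congr rfl (fun z hz => Finset.sum_congr rfl
          (fun c hc => by rw [insert_erase hc]))]
        rw [Finset.sum_congr rfl (fun z hz => by
          rw [sum_const, (mem_powersetCard.mp hz).2, nsmul_eq_mul])]
        rw [← mul_sum]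
        push_cast
        ring
      have cardsd : ∀ z ∈ x.powersetCard i, (x \ z).card = w - i := by
        intro z hz
        rw [mem_powersetCard] at hz
        rw [card_sdiff_of_subset hz.1, hx, hz.2]
      have p1' : ∑ z ∈ x.powersetCard i, ∑ c ∈ x \ z, ∑ d ∈ x \ z, f (insert d z)
          = ((w - i : ℕ) : ℝ) * (((i:ℝ)+1) * ∑ z ∈ x.powersetCard (i+1), f z) := by
        rw [Finset.sum_congr rfl (fun z hz => by
          rw [sum_const, cardsd z hz, nsmul_eq_mul]), ← mul_sum, q]
      have p3' : ∑ z ∈ x.powersetCard i, ∑ c ∈ x \ z, ∑ d ∈ xᶜ, f (insert d z)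
          = ((w - i : ℕ) : ℝ) * ∑ b ∈ xᶜ, ∑ z ∈ x.powersetCard i, f (insert b z) := by
        rw [Finset.sum_congr rfl (fun z hz => by
          rw [sum_const, cardsd z hz, nsmul_eq_mul]), ← mul_sum, Finset.sum_comm]
      have p2 : ∑ z ∈ x.powersetCard (i+1), ∑ _c ∈ z, f z
          = ((i:ℝ)+1) * ∑ z ∈ x.powersetCard (i+1), f z := by
        rw [Finset.sum_congr rfl (fun z hz => by
          rw [sum_const, (mem_powersetCard.mp hz).2, nsmul_eq_mul])]
        rw [← mul_sum]
        push_cast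
        ring
      rw [p1, p3, p1', p3', p2]
    rw [hLHS]
    have c1 : ((n - w : ℕ) : ℝ) = (n : ℝ) - w := by
      have h2 : w ≤ n := by omega
      exact Nat.cast_sub h2
    have c2 : ((w - (i+1) : ℕ) : ℝ) = (w : ℝ) - ((i : ℝ) + 1) := by
      have h2 : i + 1 ≤ w := hiw
      push_cast [Nat.cast_sub h2]
      ring
    have c3 : ((w - i : ℕ) : ℝ) = (w : ℝ) - i := by
      have h2 : i ≤ w := by omega
      exact Nat.cast_sub h2
    rw [c1, c2, c3]
    rw [c3] at hKey
    push_cast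
    linear_combination -hKey
end

section
/- Let f : V(J(n,w)) → ℝ with w ≥ 1. Then the induced function I^{w,w-1}(f) on J(n,w-1), given by I^{w,w-1}(f)(x) = Σ_{y : w-subset, x ⊂ y} f(y), is identically zero if and only if f satisfies A f = -w · f, where A is the adjacency matrix of J(n,w). -/
open Finset

private lemma double_swap {n : ℕ} (P Q : Finset (Fin n) → Prop) [DecidablePred P]
    [DecidablePred Q] (g h : Finset (Fin n) → ℝ) :
    ∑ x ∈ univ.filter P, g x * ∑ y ∈ univ.filter (fun y => Q y ∧ x ⊆ y), h y
      = ∑ y ∈ univ.filter Q, h y * ∑ x ∈ univ.filter (fun x => P x ∧ x ⊆ y), g x := by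
  trans (∑ x ∈ (univ : Finset (Finset (Fin n))), ∑ y ∈ (univ : Finset (Finset (Fin n))),
      if P x ∧ Q y ∧ x ⊆ y then g x * h y else 0)
  · rw [sum_filter]
    refine sum_congr rfl fun x _ => ?_
    by_cases hP : P x
    · simp only [hP, if_true, mul_sum, sum_filter]
      refine sum_congr rfl fun y _ => ?_
      by_cases hQ : Q y <;> by_cases hxy : x ⊆ y <;> simp [hP, hQ, hxy]
    · simp [hP]
  · rw [Finset.sum_comm, sum_filter]
    refine sum_congr rfl fun y _ => ?_
    by_cases hQ : Q y
    · simp only [hQ, if_true, mul_sum, sum_filter]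
      refine sum_congr rfl fun x _ => ?_
      by_cases hP : P x <;> by_cases hxy : x ⊆ y <;> simp [hP, hQ, hxy, mul_comm]
    · simp [hQ]

private lemma key_identity {n w : ℕ} (hw : 1 ≤ w) (f : Finset (Fin n) → ℝ)
    (z : Finset (Fin n)) (hz : z.card = w) :
    ∑ x ∈ univ.filter (fun x : Finset (Fin n) => x.card = w - 1 ∧ x ⊆ z),
        ∑ y ∈ univ.filter (fun y : Finset (Fin n) => y.card = w ∧ x ⊆ y), f y
      = (∑ y ∈ univ.filter (fun y : Finset (Fin n) => y.card = w ∧ (z ∩ y).card + 1 = w), f y)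
        + (w : ℝ) * f z := by
  have hsw := double_swap (fun x : Finset (Fin n) => x.card = w - 1 ∧ x ⊆ z)
      (fun y : Finset (Fin n) => y.card = w) (fun _ => (1 : ℝ)) f
  simp only [one_mul, sum_const, nsmul_eq_mul, mul_one] at hsw
  rw [hsw]
  have hcount : ∀ y : Finset (Fin n),
      (univ.filter (fun x : Finset (Fin n) => (x.card = w - 1 ∧ x ⊆ z) ∧ x ⊆ y)).card
        = (z ∩ y).card.choose (w - 1) := by
    intro y
    rw [← card_powersetCard]
    congr 1
    ext a
    simp only [mem_filter, mem_univ, true_and, mem_powersetCard, subset_inter_iff]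
    tauto
  simp only [hcount]
  rw [← Finset.sum_filter_add_sum_filter_not
      (univ.filter (fun y : Finset (Fin n) => y.card = w))
      (fun y => (z ∩ y).card + 1 = w), filter_filter, filter_filter]
  congr 1
  · refine sum_congr rfl fun y hy => ?_
    simp only [mem_filter, mem_univ, true_and] at hy
    have : (z ∩ y).card = w - 1 := by omega
    rw [this, Nat.choose_self]
    simp
  · rw [Finset.sum_eq_single_of_mem z]
    · rw [inter_self, hz, Nat.choose_symm hw, Nat.choose_one_right, mul_comm]
    · simp only [mem_filter, mem_univ, true_and]
      refine ⟨hz, ?_⟩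
      rw [inter_self, hz]; omega
    · intro y hy hyz
      simp only [mem_filter, mem_univ, true_and] at hy
      have h1 : (z ∩ y).card ≤ w := by
        have := card_le_card (inter_subset_left : z ∩ y ⊆ z)
        omega
      have h2 : (z ∩ y).card ≠ w := by
        intro hc
        apply hyz
        have hzy : z ⊆ y := by
          have := Finset.eq_of_subset_of_card_le (inter_subset_left : z ∩ y ⊆ z)
            (by omega)
          rw [← this]
          exact inter_subset_right
        exact (Finset.eq_of_subset_of_card_le hzy (by omega)).symm
      have : (z ∩ y).card < w - 1 := by omega
      rw [Nat.choose_eq_zero_of_lt this]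
      simp

/-- For `f` on the `w`-subsets (`w ≥ 1`), the induced function
`I^{w,w-1}(f)(x) = ∑_{y ⊇ x, |y| = w} f(y)` on `J(n, w-1)` is identically zero
iff `f` is a `(-w)`-eigenfunction of `J(n,w)`. -/
theorem induced_zero_iff_min_eigen (n w : ℕ) (hw : 1 ≤ w) (hwn : w ≤ n)
    (f : Finset (Fin n) → ℝ) :
    (∀ x : Finset (Fin n), x.card = w - 1 →
      ∑ y ∈ univ.filter (fun y : Finset (Fin n) => y.card = w ∧ x ⊆ y), f y = 0)
    ↔ (∀ x : Finset (Fin n), x.card = w →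
      ∑ y ∈ univ.filter (fun y : Finset (Fin n) => y.card = w ∧ (x ∩ y).card + 1 = w), f y
        = -(w : ℝ) * f x) := by
  set S : Finset (Fin n) → ℝ :=
    fun x => ∑ y ∈ univ.filter (fun y : Finset (Fin n) => y.card = w ∧ x ⊆ y), f y with hS
  constructor
  · intro h x hx
    have hk := key_identity hw f x hx
    have h0 : ∑ p ∈ univ.filter (fun p : Finset (Fin n) => p.card = w - 1 ∧ p ⊆ x),
        ∑ y ∈ univ.filter (fun y : Finset (Fin n) => y.card = w ∧ p ⊆ y), f y = 0 :=
      Finset.sum_eq_zero fun p hp => by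
        simp only [mem_filter, mem_univ, true_and] at hp
        exact h p hp.1
    rw [h0] at hk
    linarith
  · intro h x hx
    have hz : ∀ z : Finset (Fin n), z.card = w →
        ∑ p ∈ univ.filter (fun p : Finset (Fin n) => p.card = w - 1 ∧ p ⊆ z), S p = 0 := by
      intro z hzc
      have hk := key_identity hw f z hzc
      rw [h z hzc] at hk
      rw [hS]
      linarith
    have hsq : ∑ p ∈ univ.filter (fun p : Finset (Fin n) => p.card = w - 1), S p * S p = 0 := by
      have := double_swap (fun p : Finset (Fin n) => p.card = w - 1)
          (fun y : Finset (Fin n) => y.card = w) S f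
      rw [hS]
      rw [this]
      refine Finset.sum_eq_zero fun y hy => ?_
      simp only [mem_filter, mem_univ, true_and] at hy
      rw [hz y hy, mul_zero]
    have hmem : x ∈ univ.filter (fun p : Finset (Fin n) => p.card = w - 1) := by
      simp [hx]
    have := (Finset.sum_eq_zero_iff_of_nonneg
        (fun p _ => mul_self_nonneg (S p))).mp hsq x hmem
    exact mul_self_eq_zero.mp this
end

section
/- Fix disjoint i-element subsets M = {m_1,...,m_i} and M' = {m_1',...,m_i'} of {1,...,n} with n ≥ w + i and w ≥ i. Define f^{i,w,n} on w-subsets x of {1,...,n} by: f^{i,w,n}(x) = (-1)^{|x ∩ M|} if |x ∩ (M ∪ M')| = i and for every k ∈ {1,...,i} exactly one of m_k, m_k' lies in x; otherwise f^{i,w,n}(x) = 0. Then f^{i,w,n} is an eigenfunction of the Johnson graph J(n,w) with eigenvalue (w-i)(n-w-i) - i. -/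
/-!
Let `A f (x) = ∑_{a ∈ x, b ∉ x} f (x - a + b)` be the adjacency operator of `J(n,w)`; it
commutes with permutations of the ground set. Since `f(x) = ∏ₖ (1[m' k ∈ x] - 1[m k ∈ x])`,
`f` changes sign under the transposition of `m k` and `m' k`. If `x` contains both or neither of
`m k, m' k`, this transposition fixes `x`, so `A f (x) = -A f (x) = 0 = λ f(x)`. Otherwise `x`
meets every pair once: exchanging a paired element for its partner gives `-f(x)`, exchanging two
unpaired elements gives `f(x)`, and every other exchange meets some pair twice or not at all,
where `f` vanishes. There are `i` exchanges of the first kind and `(w-i)(n-w-i)` of the second.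
-/

open Finset

/-- The function `f^{i,w,n}` built from disjoint paired `i`-sets `M = {m 1,…,m i}`,
`M' = {m' 1,…,m' i}`. -/
noncomputable def steinerFun (n i : ℕ) (m m' : Fin i → Fin n)
    (x : Finset (Fin n)) : ℝ :=
  if ∀ k : Fin i, Xor (m k ∈ x) (m' k ∈ x) then
    (-1 : ℝ) ^ ((x ∩ Finset.image m Finset.univ).card)
  else 0

open Function

section Johnson

variable {α : Type*} [DecidableEq α]

lemma insert_erase_sdiff_self {x : Finset α} {a b : α} (hb : b ∉ x) :
    insert b (x.erase a) \ x = {b} := by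
  grind

lemma sdiff_insert_erase_self {x : Finset α} {a b : α} (ha : a ∈ x) (hb : b ∉ x) :
    x \ insert b (x.erase a) = {a} := by
  grind

lemma insert_erase_eq_of_sdiff_eq {x y : Finset α} {a b : α} (ha : x \ y = {a})
    (hb : y \ x = {b}) : insert b (x.erase a) = y := by
  ext c
  have hac := Finset.ext_iff.mp ha c
  have hbc := Finset.ext_iff.mp hb c
  simp only [mem_sdiff, mem_singleton] at hac hbc
  simp only [mem_insert, mem_erase]
  grind

lemma insert_erase_eq_map_swap {x : Finset α} {a b : α} (ha : a ∈ x) (hb : b ∉ x) :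
    insert b (x.erase a) = x.map (Equiv.swap a b).toEmbedding := by
  ext c
  rw [mem_map_equiv, Equiv.symm_swap, Equiv.swap_apply_def]
  grind

lemma map_swap_eq_self {x : Finset α} {a b : α} (h : a ∈ x ↔ b ∈ x) :
    x.map (Equiv.swap a b).toEmbedding = x := by
  ext c
  rw [mem_map_equiv, Equiv.symm_swap, Equiv.swap_apply_def]
  grind

lemma johnson_adjacent_iff_card_sdiff {x y : Finset α} :
    #y = #x ∧ #(x ∩ y) + 1 = #x ↔ #(x \ y) = 1 ∧ #(y \ x) = 1 := by
  have hx := card_sdiff_add_card_inter x y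
  have hy := card_sdiff_add_card_inter y x
  rw [inter_comm] at hy
  omega

variable [Fintype α]

def johnsonAdj {M : Type*} [AddCommMonoid M] (f : Finset α → M) (x : Finset α) : M :=
  ∑ a ∈ x, ∑ b ∈ xᶜ, f (insert b (x.erase a))

theorem sum_johnson_neighbors {M : Type*} [AddCommMonoid M] (f : Finset α → M)
    (x : Finset α) :
    ∑ y ∈ univ.filter (fun y : Finset α => #y = #x ∧ #(x ∩ y) + 1 = #x), f y
      = johnsonAdj f x := by
  rw [johnsonAdj, ← sum_product']
  symm
  refine sum_bij (fun p _ => insert p.2 (x.erase p.1)) ?_ ?_ ?_ fun _ _ => rfl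
  · rintro ⟨a, b⟩ hab
    rw [mem_product, mem_compl] at hab
    rw [mem_filter, johnson_adjacent_iff_card_sdiff, sdiff_insert_erase_self hab.1 hab.2,
      insert_erase_sdiff_self hab.2]
    simp
  · rintro ⟨a, b⟩ hab ⟨a', b'⟩ hab' h
    rw [mem_product, mem_compl] at hab hab'
    have ha := congrArg (x \ ·) h
    have hb := congrArg (· \ x) h
    simp only [sdiff_insert_erase_self hab.1 hab.2, sdiff_insert_erase_self hab'.1 hab'.2,
      insert_erase_sdiff_self hab.2, insert_erase_sdiff_self hab'.2, singleton_inj] at ha hb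
    rw [ha, hb]
  · intro y hy
    rw [mem_filter, johnson_adjacent_iff_card_sdiff] at hy
    obtain ⟨a, ha⟩ := card_eq_one.mp hy.2.1
    obtain ⟨b, hb⟩ := card_eq_one.mp hy.2.2
    refine ⟨(a, b), ?_, insert_erase_eq_of_sdiff_eq ha hb⟩
    have ha' := (mem_sdiff.mp (ha ▸ mem_singleton_self a)).1
    have hb' := (mem_sdiff.mp (hb ▸ mem_singleton_self b)).2
    exact mem_product.mpr ⟨ha', mem_compl.mpr hb'⟩

lemma johnsonAdj_neg {M : Type*} [AddCommGroup M] (f : Finset α → M) (x : Finset α) :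
    johnsonAdj (fun y => -f y) x = -johnsonAdj f x := by
  simp only [johnsonAdj, sum_neg_distrib]

lemma johnsonAdj_map_perm {M : Type*} [AddCommMonoid M] (σ : Equiv.Perm α)
    (f : Finset α → M) (x : Finset α) :
    johnsonAdj f (x.map σ.toEmbedding) = johnsonAdj (fun y => f (y.map σ.toEmbedding)) x := by
  have hcompl : (x.map σ.toEmbedding)ᶜ = xᶜ.map σ.toEmbedding := by
    ext c
    simp only [mem_compl, mem_map_equiv]
  simp only [johnsonAdj, hcompl, sum_map, map_insert, map_erase]

end Johnson

section SteinerFun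

variable {n i : ℕ} {m m' : Fin i → Fin n}

lemma steinerFun_eq_prod (hm : Injective m) (x : Finset (Fin n)) :
    steinerFun n i m m' x
      = ∏ k, ((if m' k ∈ x then 1 else 0) - if m k ∈ x then 1 else 0 : ℝ) := by
  unfold steinerFun
  split_ifs with hx
  · have hfactor : ∀ k, ((if m' k ∈ x then 1 else 0) - if m k ∈ x then 1 else 0 : ℝ)
        = if m k ∈ x then -1 else 1 := fun k => by
      rcases hx k with ⟨h, h'⟩ | ⟨h', h⟩ <;> simp [h, h']
    have hcard : #(x ∩ univ.image m) = #(univ.filter fun k => m k ∈ x) := by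
      rw [inter_comm, ← filter_mem_eq_inter, filter_image, card_image_of_injective _ hm]
    rw [prod_congr rfl fun k _ => hfactor k, prod_ite, prod_const, prod_const, one_pow,
      mul_one, hcard]
  · obtain ⟨k, hk⟩ := not_forall.mp hx
    rw [xor_iff_not_iff, not_not] at hk
    refine (prod_eq_zero (mem_univ k) ?_).symm
    by_cases h : m k ∈ x <;> simp [h, ← hk]

lemma steinerFun_eq_zero_of_iff {x : Finset (Fin n)} (k : Fin i) (hk : m k ∈ x ↔ m' k ∈ x) :
    steinerFun n i m m' x = 0 :=
  if_neg fun hx => (xor_iff_not_iff _ _).mp (hx k) hk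

lemma steinerFun_congr {x y : Finset (Fin n)} (hmem : ∀ k, m k ∈ x ↔ m k ∈ y)
    (hmem' : ∀ k, m' k ∈ x ↔ m' k ∈ y) : steinerFun n i m m' x = steinerFun n i m m' y := by
  have hM : x ∩ univ.image m = y ∩ univ.image m := by
    ext c
    simp only [mem_inter, mem_image, mem_univ, true_and]
    grind
  simp only [steinerFun, hmem, hmem', hM]

lemma steinerFun_map_swap (hinj : Injective (Sum.elim m m')) (k : Fin i) (x : Finset (Fin n)) :
    steinerFun n i m m' (x.map (Equiv.swap (m k) (m' k)).toEmbedding)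
      = -steinerFun n i m m' x := by
  obtain ⟨hm, hm', hmm'⟩ := Sum.elim_injective.mp hinj
  have hfix : ∀ j ≠ k, ∀ c ∈ ({m j, m' j} : Finset (Fin n)),
      Equiv.swap (m k) (m' k) c = c := by
    intro j hj c hc
    apply Equiv.swap_apply_of_ne_of_ne <;> grind
  rw [steinerFun_eq_prod hm, steinerFun_eq_prod hm, ← mul_prod_erase _ _ (mem_univ k),
    ← mul_prod_erase _ _ (mem_univ k)]
  simp only [mem_map_equiv, Equiv.symm_swap, Equiv.swap_apply_left, Equiv.swap_apply_right]
  rw [prod_congr rfl fun j hj => by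
    rw [hfix j (ne_of_mem_erase hj) _ (by simp), hfix j (ne_of_mem_erase hj) _ (by simp)]]
  ring

lemma card_filter_mem_image_sumElim (hinj : Injective (Sum.elim m m')) {x : Finset (Fin n)}
    (hx : ∀ k, Xor (m k ∈ x) (m' k ∈ x)) :
    #(x.filter (· ∈ univ.image (Sum.elim m m'))) = i := by
  have hterm : ∀ k, ((if m k ∈ x then 1 else 0) + if m' k ∈ x then 1 else 0 : ℕ) = 1 :=
    fun k => by rcases hx k with ⟨h, h'⟩ | ⟨h', h⟩ <;> simp [h, h']
  rw [filter_mem_eq_inter, inter_comm, ← filter_mem_eq_inter, filter_image,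
    card_image_of_injective _ hinj, card_filter, Fintype.sum_sum_type, ← sum_add_distrib]
  simp only [Sum.elim_inl, Sum.elim_inr]
  exact (sum_congr rfl fun k _ => hterm k).trans (by simp)

lemma sum_steinerFun_insert_erase_paired (hinj : Injective (Sum.elim m m')) {x : Finset (Fin n)}
    {k : Fin i} {a a' : Fin n} (hk : a = m k ∧ a' = m' k ∨ a = m' k ∧ a' = m k)
    (ha : a ∈ x) (ha' : a' ∉ x) :
    ∑ b ∈ xᶜ, steinerFun n i m m' (insert b (x.erase a)) = -steinerFun n i m m' x := by
  have hswap : Equiv.swap a a' = Equiv.swap (m k) (m' k) := by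
    rcases hk with ⟨rfl, rfl⟩ | ⟨rfl, rfl⟩
    · rfl
    · exact Equiv.swap_comm _ _
  rw [sum_eq_single_of_mem a' (mem_compl.mpr ha'), insert_erase_eq_map_swap ha ha', hswap,
    steinerFun_map_swap hinj]
  intro b hb hba'
  apply steinerFun_eq_zero_of_iff k
  have hbx := mem_compl.mp hb
  rcases hk with ⟨rfl, rfl⟩ | ⟨rfl, rfl⟩ <;> grind

lemma sum_steinerFun_insert_erase_unpaired {x : Finset (Fin n)}
    (hx : ∀ k, Xor (m k ∈ x) (m' k ∈ x)) {a : Fin n} (ha : a ∉ univ.image (Sum.elim m m')) :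
    ∑ b ∈ xᶜ, steinerFun n i m m' (insert b (x.erase a))
      = #(xᶜ.filter (· ∉ univ.image (Sum.elim m m'))) * steinerFun n i m m' x := by
  rw [← nsmul_eq_mul, ← sum_const, sum_filter]
  refine sum_congr rfl fun b hb => ?_
  have hbx := mem_compl.mp hb
  simp only [mem_image, mem_univ, true_and, Sum.exists, Sum.elim_inl, Sum.elim_inr,
    not_exists, not_or] at ha
  split_ifs with hbS
  · obtain ⟨⟨k⟩ | ⟨k⟩, -, rfl⟩ := mem_image.mp hbS
    · exact steinerFun_eq_zero_of_iff k (by grind)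
    · exact steinerFun_eq_zero_of_iff k (by grind)
  · simp only [mem_image, mem_univ, true_and, Sum.exists, Sum.elim_inl, Sum.elim_inr,
      not_exists, not_or] at hbS
    exact steinerFun_congr (fun k => by grind) (fun k => by grind)

theorem johnsonAdj_steinerFun_of_xor (hinj : Injective (Sum.elim m m')) {x : Finset (Fin n)}
    (hx : ∀ k, Xor (m k ∈ x) (m' k ∈ x)) :
    johnsonAdj (steinerFun n i m m') x
      = (((#x : ℝ) - i) * ((n : ℝ) - #x - i) - i) * steinerFun n i m m' x := by
  set S := univ.image (Sum.elim m m')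
  have hxc : ∀ k, Xor (m k ∈ xᶜ) (m' k ∈ xᶜ) := fun k => by
    simpa only [mem_compl, xor_not_not] using hx k
  have hpaired : ∀ a ∈ x.filter (· ∈ S),
      ∑ b ∈ xᶜ, steinerFun n i m m' (insert b (x.erase a)) = -steinerFun n i m m' x := by
    intro a ha
    obtain ⟨ha, haS⟩ := mem_filter.mp ha
    obtain ⟨⟨k⟩ | ⟨k⟩, -, rfl⟩ := mem_image.mp haS
    · exact sum_steinerFun_insert_erase_paired hinj (Or.inl ⟨rfl, rfl⟩) ha (by grind)
    · exact sum_steinerFun_insert_erase_paired hinj (Or.inr ⟨rfl, rfl⟩) ha (by grind)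
  have hunpaired : ∀ a ∈ x.filter (· ∉ S),
      ∑ b ∈ xᶜ, steinerFun n i m m' (insert b (x.erase a))
        = #(xᶜ.filter (· ∉ S)) * steinerFun n i m m' x :=
    fun a ha => sum_steinerFun_insert_erase_unpaired hx (mem_filter.mp ha).2
  have hcard := card_filter_add_card_filter_not (s := x) (· ∈ S)
  have hcard_compl := card_filter_add_card_filter_not (s := xᶜ) (· ∈ S)
  rw [card_filter_mem_image_sumElim hinj hx] at hcard
  rw [card_filter_mem_image_sumElim hinj hxc, card_compl, Fintype.card_fin] at hcard_compl
  rw [johnsonAdj, ← sum_filter_add_sum_filter_not x (· ∈ S), sum_congr rfl hpaired,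
    sum_congr rfl hunpaired, sum_const, sum_const, card_filter_mem_image_sumElim hinj hx,
    nsmul_eq_mul, nsmul_eq_mul]
  have hx_le : #x ≤ n := by simpa using card_le_univ x
  have hunpaired_x : (#(x.filter (· ∉ S)) : ℝ) = #x - i := by
    rw [← hcard]; push_cast; ring
  have hunpaired_xc : (#(xᶜ.filter (· ∉ S)) : ℝ) = n - #x - i := by
    rw [eq_sub_iff_add_eq, eq_sub_iff_add_eq]
    exact_mod_cast (by omega : #(xᶜ.filter (· ∉ S)) + i + #x = n)
  rw [hunpaired_x, hunpaired_xc]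
  ring

theorem johnsonAdj_steinerFun_of_iff (hinj : Injective (Sum.elim m m')) {x : Finset (Fin n)}
    (k : Fin i) (hk : m k ∈ x ↔ m' k ∈ x) : johnsonAdj (steinerFun n i m m') x = 0 := by
  have h := johnsonAdj_map_perm (Equiv.swap (m k) (m' k)) (steinerFun n i m m') x
  rw [map_swap_eq_self hk] at h
  simp only [steinerFun_map_swap hinj, johnsonAdj_neg] at h
  linarith

theorem exists_steinerFun_ne_zero (hinj : Injective (Sum.elim m m')) {w : ℕ} (hiw : i ≤ w)
    (hwn : w + i ≤ n) : ∃ x : Finset (Fin n), #x = w ∧ steinerFun n i m m' x ≠ 0 := by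
  obtain ⟨hm, hm', hmm'⟩ := Sum.elim_injective.mp hinj
  have hdisj : univ.image m ⊆ (univ.image m')ᶜ := by
    intro c hc
    simp only [mem_compl, mem_image, mem_univ, true_and] at hc ⊢
    grind
  obtain ⟨x, hMx, hxM', hx⟩ := exists_subsuperset_card_eq (n := w) hdisj
    (by rw [card_image_of_injective _ hm, card_univ, Fintype.card_fin]; exact hiw)
    (by rw [card_compl, card_image_of_injective _ hm', card_univ, Fintype.card_fin,
      Fintype.card_fin]; omega)
  refine ⟨x, hx, ?_⟩
  have hgood : ∀ k, Xor (m k ∈ x) (m' k ∈ x) := fun k =>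
    Or.inl ⟨hMx (mem_image_of_mem m (mem_univ k)),
      fun h => mem_compl.mp (hxM' h) (mem_image_of_mem m' (mem_univ k))⟩
  rw [steinerFun, if_pos hgood]
  exact pow_ne_zero _ (by norm_num)

end SteinerFun

/-- `f^{i,w,n}` is an eigenfunction of `J(n,w)` with eigenvalue `(w-i)(n-w-i) - i`. -/
theorem steinerFun_eigenfunction (n i w : ℕ) (hiw : i ≤ w) (hwn : w + i ≤ n)
    (m m' : Fin i → Fin n) (hinj : Function.Injective (Sum.elim m m')) :
    (∀ x : Finset (Fin n), x.card = w →
      ∑ y ∈ univ.filter (fun y : Finset (Fin n) => y.card = w ∧ (x ∩ y).card + 1 = w),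
          steinerFun n i m m' y
        = (((w : ℝ) - i) * ((n : ℝ) - w - i) - i) * steinerFun n i m m' x)
    ∧ ∃ x : Finset (Fin n), x.card = w ∧ steinerFun n i m m' x ≠ 0 := by
  refine ⟨fun x hx => ?_, exists_steinerFun_ne_zero hinj hiw hwn⟩
  subst hx
  rw [sum_johnson_neighbors]
  by_cases hgood : ∀ k, Xor (m k ∈ x) (m' k ∈ x)
  · exact johnsonAdj_steinerFun_of_xor hinj hgood
  · obtain ⟨k, hk⟩ := not_forall.mp hgood
    rw [xor_iff_not_iff, not_not] at hk
    rw [steinerFun_eq_zero_of_iff k hk, mul_zero]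
    exact johnsonAdj_steinerFun_of_iff hinj k hk
end

section
/- Let i ≥ 1 and n ≥ 2i. If f is an eigenfunction of J(n,i) with eigenvalue -i whose support has size exactly 2^i, then there exist disjoint i-subsets M = {m_1,...,m_i}, M' = {m_1',...,m_i'} of {1,...,n} and a nonzero scalar c such that f(x) = c·(-1)^{|x ∩ M|} when for each k exactly one of m_k, m_k' belongs to x, and f(x) = 0 otherwise. -/
/-!
An eigenfunction for the eigenvalue `-i` is harmonic: its shadow sums `∑_{a ∉ S} f (S ∪ {a})`,
`|S| = i - 1`, vanish, since the sum of their squares is `⟨f, (A + i) f⟩ = 0`. For a harmonic `f`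
whose support spans a set `V`, the up and down operators `U`, `D` satisfy `DU - UD = (|V| - 2i)`,
so `0 ≤ ‖U f‖² = (|V| - 2i) ‖f‖²` and `|V| ≥ 2i`. The link `y ↦ f (y ∪ {a})` of a harmonic
function is harmonic one level down, and double counting `∑_{a ∈ V} |supp (link a f)| = i |supp f|`
gives `|supp f| ≥ 2^i` by induction. In the equality case `|V| = 2i` and every point lies in exactly
`2^(i-1)` support sets. By induction one link is a signed transversal function for pairs `(m, m')`;
the point `ā` of `V` outside `{a} ∪ m ∪ m'` lies in exactly the support sets avoiding `a`, and
harmonicity at `S` gives `f (S ∪ {ā}) = -f (S ∪ {a})`, so `(a, ā)` extends the pairs.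
-/

open Finset

namespace Finset

lemma sum_sq_sum_filter {β γ : Type*} (F : Finset β) (G : Finset γ) (R : β → γ → Prop)
    [∀ Z x, Decidable (R Z x)] (g : γ → ℝ) :
    ∑ Z ∈ F, (∑ x ∈ G with R Z x, g x) ^ 2 =
      ∑ x ∈ G, ∑ y ∈ G, g x * g y * #{Z ∈ F | R Z x ∧ R Z y} := by
  simp_rw [sq, sum_filter, sum_mul_sum, card_filter, Nat.cast_sum, mul_sum]
  rw [sum_comm]
  refine sum_congr rfl fun x _ => ?_
  rw [sum_comm]
  refine sum_congr rfl fun y _ => sum_congr rfl fun Z _ => ?_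
  by_cases hx : R Z x <;> by_cases hy : R Z y <;> simp [hx, hy]

variable {α : Type*} [DecidableEq α]

lemma sum_filter_subset_eq_sum_insert {V S : Finset α} (hS : S ⊆ V) (g : Finset α → ℝ) :
    ∑ x ∈ powersetCard (#S + 1) V with S ⊆ x, g x = ∑ a ∈ V \ S, g (insert a S) := by
  rw [filter_powersetCard_subset S V _ hS (by omega), Nat.add_sub_cancel_left, powersetCard_one,
    map_eq_image, image_image, sum_image]
  · simp
  · intro a ha b hb hab
    simp only [coe_sdiff, Set.mem_sdiff, mem_coe, Function.comp_apply] at ha hb hab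
    exact (insert_inj ha.2).1 hab

lemma card_filter_powersetCard_superset {V s : Finset α} {n : ℕ} (hs : s ⊆ V) (hn : #s ≤ n) :
    #{T ∈ powersetCard n V | s ⊆ T} = (#V - #s).choose (n - #s) := by
  rw [filter_powersetCard_subset s V n hs hn, card_image_of_injOn, card_powersetCard,
    card_sdiff_of_subset hs]
  intro T hT U hU hTU
  simp only [mem_coe, mem_powersetCard] at hT hU
  rw [← union_sdiff_cancel_right (disjoint_of_subset_left hT.1 sdiff_disjoint),
    show T ∪ s = U ∪ s from hTU,
    union_sdiff_cancel_right (disjoint_of_subset_left hU.1 sdiff_disjoint)]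

lemma card_common_subsets (k : ℕ) {V x y : Finset α} (hx : x ⊆ V) :
    #{S ∈ powersetCard k V | S ⊆ x ∧ S ⊆ y} = (#(x ∩ y)).choose k := by
  rw [← card_powersetCard]
  congr 1
  ext S
  simp only [mem_filter, mem_powersetCard, subset_inter_iff]
  exact ⟨fun h => ⟨h.2, h.1.2⟩, fun h => ⟨⟨h.1.1.trans hx, h.2⟩, h.1⟩⟩

lemma card_inter_lt_of_ne {x y : Finset α} (hxy : #x = #y) (hne : x ≠ y) : #(x ∩ y) < #x :=
  card_lt_card <| (inter_subset_left).ssubset_of_ne fun h =>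
    hne (eq_of_subset_of_card_le (inter_eq_left.1 h) hxy.ge)

lemma choose_card_inter {k : ℕ} {x y : Finset α} (hx : #x = k + 1) (hy : #y = k + 1) :
    ((#(x ∩ y)).choose k : ℝ) =
      (if x = y then (k + 1 : ℝ) else 0) + if #(x ∩ y) = k then 1 else 0 := by
  by_cases hxy : x = y
  · subst hxy
    simp [hx]
  · have hlt : #(x ∩ y) < k + 1 := hx ▸ card_inter_lt_of_ne (hx.trans hy.symm) hxy
    rcases (Nat.lt_succ_iff.1 hlt).eq_or_lt with h | h
    · simp [hxy, h]
    · simp [hxy, h.ne, Nat.choose_eq_zero_of_lt h]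

lemma card_common_supersets {k : ℕ} {V x y : Finset α} (hx : x ⊆ V) (hy : y ⊆ V)
    (hxc : #x = k + 1) (hyc : #y = k + 1) :
    (#{T ∈ powersetCard (k + 2) V | x ⊆ T ∧ y ⊆ T} : ℝ) =
      (if x = y then (#V - (k + 1) : ℝ) else 0) + if #(x ∩ y) = k then 1 else 0 := by
  simp_rw [← union_subset_iff]
  have hu : #(x ∪ y) + #(x ∩ y) = 2 * (k + 1) := by
    rw [card_union_add_card_inter, hxc, hyc]; ring
  by_cases hxy : x = y
  · subst hxy
    rw [union_self, card_filter_powersetCard_superset hx (by omega), hxc,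
      show k + 2 - (k + 1) = 1 by omega, Nat.choose_one_right,
      Nat.cast_sub (hxc ▸ card_le_card hx)]
    simp [hxc]
  · have hlt : #(x ∩ y) < k + 1 := hxc ▸ card_inter_lt_of_ne (hxc.trans hyc.symm) hxy
    rcases (Nat.lt_succ_iff.1 hlt).eq_or_lt with h | h
    · rw [card_filter_powersetCard_superset (union_subset hx hy) (by omega),
        show k + 2 - #(x ∪ y) = 0 by omega]
      simp [hxy, h]
    · rw [filter_eq_empty_iff.2 fun T hT hsub => ?_]
      · simp [hxy, h.ne]
      · have := card_le_card hsub
        rw [mem_powersetCard] at hT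
        omega

/-- The commutation relation `DU - UD = (|V| - 2(k + 1))` of the down and up operators on the
`(k + 1)`-subsets of `V`. -/
lemma card_common_supersets_sub_card_common_subsets {k : ℕ} {V x y : Finset α} (hx : x ⊆ V)
    (hy : y ⊆ V) (hxc : #x = k + 1) (hyc : #y = k + 1) :
    (#{T ∈ powersetCard (k + 2) V | x ⊆ T ∧ y ⊆ T} : ℝ) -
        #{S ∈ powersetCard k V | S ⊆ x ∧ S ⊆ y} =
      if x = y then (#V : ℝ) - 2 * (k + 1) else 0 := by
  rw [card_common_supersets hx hy hxc hyc, card_common_subsets k hx,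
    choose_card_inter hxc hyc]
  split_ifs <;> ring

lemma forall_or_of_card_le_card_filter_add {β : Type*} [DecidableEq β] {s : Finset β}
    {p q : β → Prop} [DecidablePred p] [DecidablePred q] (hpq : ∀ x ∈ s, p x → ¬q x)
    (h : #s ≤ #{x ∈ s | p x} + #{x ∈ s | q x}) : ∀ x ∈ s, p x ∨ q x := by
  have hfilter : {x ∈ s | p x ∨ q x} = s := eq_of_subset_of_card_le (filter_subset _ _) <| by
    rwa [filter_or, card_union_of_disjoint (disjoint_filter.2 hpq)]
  intro x hx
  rw [← hfilter] at hx
  exact (mem_filter.1 hx).2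

end Finset

namespace Johnson

section Transversal

variable {α : Type*} {i : ℕ} {m m' : Fin i → α}

def IsTransversal (m m' : Fin i → α) (x : Finset α) : Prop :=
  ∀ k, Xor (m k ∈ x) (m' k ∈ x)

lemma isTransversal_cons_iff {a b : α} {x : Finset α} :
    IsTransversal (Fin.cons a m : Fin (i + 1) → α) (Fin.cons b m') x ↔
      Xor (a ∈ x) (b ∈ x) ∧ IsTransversal m m' x := by
  simp [IsTransversal, Fin.forall_fin_succ]

variable [DecidableEq α]

instance : DecidablePred (IsTransversal m m') := fun _ => by
  unfold IsTransversal; infer_instance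

noncomputable def transversalFn (m m' : Fin i → α) (c : ℝ) (x : Finset α) : ℝ :=
  if IsTransversal m m' x then c * (-1) ^ #(x ∩ univ.image m) else 0

def IsTransversalFn (i : ℕ) (f : Finset α → ℝ) : Prop :=
  ∃ (m m' : Fin i → α) (c : ℝ), Function.Injective (Sum.elim m m') ∧ c ≠ 0 ∧
    ∀ x : Finset α, #x = i → f x = transversalFn m m' c x

lemma transversalFn_ne_zero_iff {c : ℝ} (hc : c ≠ 0) {x : Finset α} :
    transversalFn m m' c x ≠ 0 ↔ IsTransversal m m' x := by
  unfold transversalFn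
  split_ifs with h <;> simp [h, hc]

lemma IsTransversal.subset (hinj : Function.Injective (Sum.elim m m')) {x : Finset α}
    (hx : IsTransversal m m' x) (hcard : #x = i) : x ⊆ univ.image (Sum.elim m m') := by
  -- `τ k` selects the member of the `k`-th pair lying in `x`: `i` distinct points, so all of `x`.
  set τ : Fin i → Fin i ⊕ Fin i := fun k => if m k ∈ x then .inl k else .inr k
  have hτ : Function.Injective τ := fun k l h => by
    simp only [τ] at h
    split_ifs at h <;> simpa using h
  have hsel : univ.image (Sum.elim m m' ∘ τ) ⊆ x := by
    simp only [subset_iff, mem_image, mem_univ, true_and, forall_exists_index,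
      forall_apply_eq_imp_iff, Function.comp_apply, τ]
    intro k
    split_ifs with h
    · exact h
    · exact ((hx k).resolve_left (by simp [h])).1
  have hx : univ.image (Sum.elim m m' ∘ τ) = x := eq_of_subset_of_card_le hsel <| by
    rw [card_image_of_injective _ (hinj.comp hτ), hcard, card_univ, Fintype.card_fin]
  rw [← hx, image_comp]
  exact image_subset_image (subset_univ _)

lemma isTransversal_image_left (hinj : Function.Injective (Sum.elim m m')) :
    IsTransversal m m' (univ.image m) := fun k => by
  left
  simp only [mem_image, mem_univ, true_and]
  exact ⟨⟨k, rfl⟩, fun ⟨l, hl⟩ => (Sum.elim_injective.1 hinj).2.2 l k hl⟩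

lemma isTransversal_image_right (hinj : Function.Injective (Sum.elim m m')) :
    IsTransversal m m' (univ.image m') := fun k => by
  right
  simp only [mem_image, mem_univ, true_and]
  exact ⟨⟨k, rfl⟩, fun ⟨l, hl⟩ => (Sum.elim_injective.1 hinj).2.2 k l hl.symm⟩

lemma isTransversal_erase_iff {c : α} (hc : c ∉ univ.image (Sum.elim m m')) {x : Finset α} :
    IsTransversal m m' (x.erase c) ↔ IsTransversal m m' x := by
  simp only [mem_image, mem_univ, true_and, not_exists, Sum.forall, Sum.elim_inl,
    Sum.elim_inr] at hc
  simp [IsTransversal, mem_erase, hc.1, hc.2]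

lemma image_cons_univ (a : α) (m : Fin i → α) :
    univ.image (Fin.cons a m : Fin (i + 1) → α) = insert a (univ.image m) := by
  ext b; simp [Fin.exists_fin_succ, eq_comm]

lemma image_subset_image_sumElim_left : univ.image m ⊆ univ.image (Sum.elim m m') := fun _ h => by
  obtain ⟨k, -, rfl⟩ := mem_image.1 h
  exact mem_image_of_mem (Sum.elim m m') (mem_univ (Sum.inl k))

variable {a b : α} {c : ℝ} {x : Finset α}

lemma transversalFn_cons_of_mem_left (hax : a ∈ x) (hbx : b ∉ x)
    (ha : a ∉ univ.image (Sum.elim m m')) :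
    transversalFn (Fin.cons a m) (Fin.cons b m') (-c) x = transversalFn m m' c (x.erase a) := by
  have haM : a ∉ univ.image m := fun h => ha (image_subset_image_sumElim_left h)
  have hcap : #(x ∩ univ.image m) = #(x.erase a ∩ univ.image m) := by
    rw [erase_inter, erase_eq_of_notMem fun h => haM (mem_inter.1 h).2]
  simp only [transversalFn, isTransversal_cons_iff, isTransversal_erase_iff ha, image_cons_univ,
    inter_insert_of_mem hax, card_insert_of_notMem fun h => haM (mem_inter.1 h).2, hcap]
  simp [hax, hbx, pow_succ]

lemma transversalFn_cons_of_mem_right (hax : a ∉ x) (hbx : b ∈ x)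
    (hb : b ∉ univ.image (Sum.elim m m')) :
    transversalFn (Fin.cons a m) (Fin.cons b m') (-c) x = -transversalFn m m' c (x.erase b) := by
  have hbM : b ∉ univ.image m := fun h => hb (image_subset_image_sumElim_left h)
  have hcap : #(x ∩ univ.image m) = #(x.erase b ∩ univ.image m) := by
    rw [erase_inter, erase_eq_of_notMem fun h => hbM (mem_inter.1 h).2]
  simp only [transversalFn, isTransversal_cons_iff, isTransversal_erase_iff hb, image_cons_univ,
    inter_insert_of_notMem hax, hcap]
  have hxor : Xor (a ∈ x) (b ∈ x) := .inr ⟨hbx, hax⟩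
  simp only [hxor, true_and]
  split_ifs <;> ring

lemma transversalFn_cons_of_not_xor (h : ¬Xor (a ∈ x) (b ∈ x)) :
    transversalFn (Fin.cons a m) (Fin.cons b m') c x = 0 := by
  simp [transversalFn, isTransversal_cons_iff, h]

lemma injective_sumElim_cons (hinj : Function.Injective (Sum.elim m m'))
    (ha : a ∉ univ.image (Sum.elim m m')) (hb : b ∉ univ.image (Sum.elim m m'))
    (hab : a ≠ b) :
    Function.Injective (Sum.elim (Fin.cons a m : Fin (i + 1) → α) (Fin.cons b m')) := by
  simp only [mem_image, mem_univ, true_and, not_exists, Sum.forall, Sum.elim_inl,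
    Sum.elim_inr] at ha hb
  obtain ⟨hm, hm', hmm'⟩ := Sum.elim_injective.1 hinj
  refine Sum.elim_injective.2 ⟨Fin.cons_injective_iff.2 ⟨?_, hm⟩,
    Fin.cons_injective_iff.2 ⟨?_, hm'⟩, Fin.forall_fin_succ.2 ⟨?_, fun k => ?_⟩⟩
  · simpa [Set.mem_range] using ha.1
  · simpa [Set.mem_range] using hb.2
  · simpa [Fin.forall_fin_succ, hab, eq_comm] using ha.2
  · simpa [Fin.forall_fin_succ, hmm' k] using hb.1 k

end Transversal

variable {α : Type*}

def link [DecidableEq α] (a : α) (f : Finset α → ℝ) (y : Finset α) : ℝ :=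
  if a ∈ y then 0 else f (insert a y)

lemma link_erase [DecidableEq α] {a : α} {f : Finset α → ℝ} {x : Finset α} (hax : a ∈ x) :
    link a f (x.erase a) = f x := by
  simp [link, insert_erase hax]

section Fintype

variable [Fintype α]

noncomputable def levelSupport (i : ℕ) (f : Finset α → ℝ) : Finset (Finset α) :=
  univ.filter fun x => #x = i ∧ f x ≠ 0

/-- Phrased with `#S + 1 = i` rather than `#S = i - 1`, so that it is vacuous at `i = 0`. -/
def IsHarmonic [DecidableEq α] (i : ℕ) (f : Finset α → ℝ) : Prop :=
  ∀ S : Finset α, #S + 1 = i → ∑ a ∈ Sᶜ, f (insert a S) = 0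

@[simp]
lemma mem_levelSupport {i : ℕ} {f : Finset α → ℝ} {x : Finset α} :
    x ∈ levelSupport i f ↔ #x = i ∧ f x ≠ 0 := by
  simp [levelSupport]

variable [DecidableEq α]

noncomputable def supportVars (i : ℕ) (f : Finset α → ℝ) : Finset α :=
  (levelSupport i f).biUnion id

variable {i : ℕ} {f : Finset α → ℝ} {a : α}

lemma subset_supportVars {x : Finset α} (hx : x ∈ levelSupport i f) : x ⊆ supportVars i f :=
  subset_biUnion_of_mem id hx

lemma mem_levelSupport_link {y : Finset α} :
    y ∈ levelSupport i (link a f) ↔ a ∉ y ∧ insert a y ∈ levelSupport (i + 1) f := by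
  by_cases hay : a ∈ y <;> simp [link, hay, card_insert_of_notMem]

lemma card_levelSupport_link :
    #(levelSupport i (link a f)) = #{x ∈ levelSupport (i + 1) f | a ∈ x} := by
  refine card_nbij' (insert a) (erase · a) (fun y hy => ?_) (fun x hx => ?_)
    (fun y hy => ?_) (fun x hx => ?_)
  · simp only [coe_filter, Set.mem_ofPred_eq, mem_coe, mem_levelSupport_link] at hy ⊢
    exact ⟨hy.2, mem_insert_self a y⟩
  · simp only [coe_filter, Set.mem_ofPred_eq, mem_coe, mem_levelSupport_link] at hx ⊢
    exact ⟨notMem_erase a x, by rw [insert_erase hx.2]; exact hx.1⟩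
  · exact erase_insert (mem_levelSupport_link.1 hy).1
  · exact insert_erase (mem_filter.1 hx).2

lemma IsHarmonic.link (hf : IsHarmonic (i + 1) f) (a : α) : IsHarmonic i (link a f) := by
  intro S hS
  by_cases haS : a ∈ S
  · exact sum_eq_zero fun b _ => by simp [Johnson.link, haS]
  · rw [← hf (insert a S) (by rw [card_insert_of_notMem haS, hS]), compl_insert,
      ← add_sum_erase _ _ (mem_compl.2 haS)]
    simp only [Johnson.link, mem_insert_self, if_true, zero_add]
    refine sum_congr rfl fun b hb => ?_
    rw [mem_erase, mem_compl] at hb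
    rw [if_neg (by simp [Ne.symm hb.1, haS]), insert_comm]

lemma sum_card_filter_mem_supportVars :
    ∑ a ∈ supportVars i f, #{x ∈ levelSupport i f | a ∈ x} = i * #(levelSupport i f) := by
  refine (sum_card_bipartiteAbove_eq_sum_card_bipartiteBelow (r := (· ∈ ·))).trans ?_
  rw [sum_const_nat fun x hx => ?_, mul_comm]
  rw [bipartiteBelow, filter_mem_eq_inter, inter_eq_right.2 (subset_supportVars hx)]
  exact (mem_levelSupport.1 hx).1

lemma nonempty_levelSupport_link (ha : a ∈ supportVars (i + 1) f) :
    (levelSupport i (link a f)).Nonempty := by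
  obtain ⟨x, hx, hax : a ∈ x⟩ := mem_biUnion.1 ha
  exact ⟨x.erase a, mem_levelSupport_link.2 ⟨notMem_erase a x, by rwa [insert_erase hax]⟩⟩

theorem isHarmonic_of_isEigenfunction_neg
    (hf : ∀ x : Finset α, #x = i →
      ∑ y ∈ univ.filter (fun y : Finset α => #y = i ∧ #(x ∩ y) + 1 = i), f y = -(i : ℝ) * f x) :
    IsHarmonic i f := by
  intro S hS
  obtain ⟨k, rfl⟩ : ∃ k, i = k + 1 := ⟨#S, hS.symm⟩
  set P := powersetCard (k + 1) (univ : Finset α)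
  have hrow :
      ∀ x ∈ P, ∑ y ∈ P, f x * f y * #{T ∈ powersetCard k univ | T ⊆ x ∧ T ⊆ y} = 0 := by
    intro x hx
    have hxc := (mem_powersetCard.1 hx).2
    have hadj : {y ∈ P | #(x ∩ y) = k} =
        univ.filter (fun y : Finset α => #y = k + 1 ∧ #(x ∩ y) + 1 = k + 1) := by
      ext y
      simp [P, mem_powersetCard]
    calc ∑ y ∈ P, f x * f y * #{T ∈ powersetCard k univ | T ⊆ x ∧ T ⊆ y}
        = ∑ y ∈ P, (f x * (if x = y then (k + 1) * f y else 0) +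
            f x * (if #(x ∩ y) = k then f y else 0)) := sum_congr rfl fun y hy => by
          rw [card_common_subsets k (subset_univ x),
            choose_card_inter hxc (mem_powersetCard.1 hy).2]
          split_ifs <;> ring
      _ = f x * ((k + 1) * f x + ∑ y ∈ {y ∈ P | #(x ∩ y) = k}, f y) := by
        rw [sum_add_distrib, ← mul_sum, ← mul_sum, sum_ite_eq P x, if_pos hx, sum_filter]
        ring
      _ = 0 := by
        rw [hadj, hf x hxc]
        push_cast
        ring
  have hsq : ∑ T ∈ powersetCard k univ, (∑ x ∈ P with T ⊆ x, f x) ^ 2 = 0 := by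
    rw [sum_sq_sum_filter]
    exact sum_eq_zero hrow
  have hS' : S ∈ powersetCard k univ := mem_powersetCard.2 ⟨subset_univ S, by omega⟩
  have hzero := pow_eq_zero_iff two_ne_zero |>.1 <|
    (sum_eq_zero_iff_of_nonneg fun _ _ => sq_nonneg _).1 hsq S hS'
  rwa [show P = powersetCard (#S + 1) univ by rw [hS],
    sum_filter_subset_eq_sum_insert (subset_univ S), ← compl_eq_univ_sdiff] at hzero

theorem IsHarmonic.two_mul_le_card {k : ℕ} {V : Finset α} (hf : IsHarmonic (k + 1) f)
    (hV : ∀ x, #x = k + 1 → f x ≠ 0 → x ⊆ V) (hne : ∃ x, #x = k + 1 ∧ f x ≠ 0) :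
    2 * (k + 1) ≤ #V := by
  set P := powersetCard (k + 1) V
  have hshadow : ∀ S ∈ powersetCard k V, ∑ x ∈ P with S ⊆ x, f x = 0 := by
    intro S hS
    rw [mem_powersetCard] at hS
    rw [show P = powersetCard (#S + 1) V by rw [hS.2], sum_filter_subset_eq_sum_insert hS.1,
      ← hf S (by rw [hS.2])]
    refine sum_subset (fun a ha => mem_compl.2 (mem_sdiff.1 ha).2) fun a ha haV => ?_
    by_contra hfa
    have haS := mem_compl.1 ha
    exact haV (mem_sdiff.2 ⟨hV _ (by rw [card_insert_of_notMem haS, hS.2]) hfa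
      (mem_insert_self a S), haS⟩)
  have hdown :
      ∑ x ∈ P, ∑ y ∈ P, f x * f y * #{S ∈ powersetCard k V | S ⊆ x ∧ S ⊆ y} = 0 := by
    rw [← sum_sq_sum_filter]
    exact sum_eq_zero fun S hS => by rw [hshadow S hS, sq, mul_zero]
  have hup : ∑ T ∈ powersetCard (k + 2) V, (∑ x ∈ P with x ⊆ T, f x) ^ 2 =
      (#V - 2 * (k + 1)) * ∑ x ∈ P, f x ^ 2 := by
    rw [sum_sq_sum_filter, ← sub_zero (∑ x ∈ P, _), ← hdown, ← sum_sub_distrib, mul_sum]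
    refine sum_congr rfl fun x hx => ?_
    simp_rw [← sum_sub_distrib, ← mul_sub]
    obtain ⟨hxV, hxc⟩ := mem_powersetCard.1 hx
    rw [sum_congr rfl fun y hy => by
      rw [card_common_supersets_sub_card_common_subsets hxV (mem_powersetCard.1 hy).1 hxc
        (mem_powersetCard.1 hy).2]]
    simp only [mul_ite, mul_zero, sum_ite_eq P x, if_pos hx]
    ring
  have hpos : 0 < ∑ x ∈ P, f x ^ 2 := by
    obtain ⟨x, hxc, hfx⟩ := hne
    exact sum_pos' (fun _ _ => sq_nonneg _)
      ⟨x, mem_powersetCard.2 ⟨hV x hxc hfx, hxc⟩, by positivity⟩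
  have hnonneg : 0 ≤ (#V - 2 * (k + 1) : ℝ) :=
    nonneg_of_mul_nonneg_left (hup ▸ sum_nonneg fun _ _ => sq_nonneg _) hpos
  exact_mod_cast (by linarith : (2 * (k + 1) : ℝ) ≤ #V)

lemma IsHarmonic.two_mul_le_card_supportVars (hf : IsHarmonic (i + 1) f)
    (hne : (levelSupport (i + 1) f).Nonempty) : 2 * (i + 1) ≤ #(supportVars (i + 1) f) := by
  obtain ⟨x, hx⟩ := hne
  exact hf.two_mul_le_card (fun y hy hfy => subset_supportVars (mem_levelSupport.2 ⟨hy, hfy⟩))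
    ⟨x, mem_levelSupport.1 hx⟩

theorem IsHarmonic.two_pow_le_card_levelSupport (hf : IsHarmonic i f)
    (hne : (levelSupport i f).Nonempty) : 2 ^ i ≤ #(levelSupport i f) := by
  induction i generalizing f with
  | zero => exact hne.card_pos
  | succ i ih =>
    have hdeg :
        ∀ a ∈ supportVars (i + 1) f, 2 ^ i ≤ #{x ∈ levelSupport (i + 1) f | a ∈ x} :=
      fun a ha => by
        rw [← card_levelSupport_link]
        exact ih (hf.link a) (nonempty_levelSupport_link ha)
    have hsum := card_nsmul_le_sum _ _ _ hdeg
    rw [smul_eq_mul, sum_card_filter_mem_supportVars] at hsum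
    refine Nat.le_of_mul_le_mul_left ?_ i.succ_pos
    calc (i + 1) * 2 ^ (i + 1) = 2 * (i + 1) * 2 ^ i := by ring
      _ ≤ #(supportVars (i + 1) f) * 2 ^ i :=
        Nat.mul_le_mul_right _ (hf.two_mul_le_card_supportVars hne)
      _ ≤ _ := hsum

lemma IsHarmonic.card_supportVars_eq (hf : IsHarmonic (i + 1) f)
    (hcard : #(levelSupport (i + 1) f) = 2 ^ (i + 1)) :
    #(supportVars (i + 1) f) = 2 * (i + 1) ∧
      ∀ a ∈ supportVars (i + 1) f, #{x ∈ levelSupport (i + 1) f | a ∈ x} = 2 ^ i := by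
  have hne : (levelSupport (i + 1) f).Nonempty := card_pos.1 (by rw [hcard]; positivity)
  have hdeg :
      ∀ a ∈ supportVars (i + 1) f, 2 ^ i ≤ #{x ∈ levelSupport (i + 1) f | a ∈ x} :=
    fun a ha => by
      rw [← card_levelSupport_link]
      exact (hf.link a).two_pow_le_card_levelSupport (nonempty_levelSupport_link ha)
  have hsum : ∑ a ∈ supportVars (i + 1) f, #{x ∈ levelSupport (i + 1) f | a ∈ x} =
      2 * (i + 1) * 2 ^ i := by
    rw [sum_card_filter_mem_supportVars, hcard]
    ring
  have hV : #(supportVars (i + 1) f) = 2 * (i + 1) := by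
    refine le_antisymm (Nat.le_of_mul_le_mul_right ?_ (pow_pos two_pos i))
      (hf.two_mul_le_card_supportVars hne)
    rw [← hsum, ← smul_eq_mul]
    exact card_nsmul_le_sum _ _ _ hdeg
  refine ⟨hV, fun a ha => ((sum_eq_sum_iff_of_le hdeg).1 ?_ a ha).symm⟩
  rw [hsum, sum_const, hV, smul_eq_mul]

section Step

variable {m m' : Fin i → α} {c : ℝ}

lemma mem_levelSupport_iff_isTransversal {g : Finset α → ℝ} (hc : c ≠ 0)
    (hg : ∀ y, #y = i → g y = transversalFn m m' c y) {y : Finset α} :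
    y ∈ levelSupport i g ↔ #y = i ∧ IsTransversal m m' y := by
  rw [mem_levelSupport]
  exact and_congr_right fun hy => by rw [hg y hy, transversalFn_ne_zero_iff hc]

lemma notMem_image_sumElim_of_link (hinj : Function.Injective (Sum.elim m m')) (hc : c ≠ 0)
    (hlink : ∀ y, #y = i → link a f y = transversalFn m m' c y) :
    a ∉ univ.image (Sum.elim m m') := by
  have hnotMem : ∀ y, #y = i → IsTransversal m m' y → a ∉ y := fun y hy ht =>
    (mem_levelSupport_link.1 ((mem_levelSupport_iff_isTransversal hc hlink).2 ⟨hy, ht⟩)).1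
  obtain ⟨hm, hm', -⟩ := Sum.elim_injective.1 hinj
  simp only [mem_image, mem_univ, true_and, Sum.exists, Sum.elim_inl, Sum.elim_inr, not_or,
    not_exists]
  refine ⟨fun k hk => hnotMem _ ?_ (isTransversal_image_left hinj)
      (hk ▸ mem_image_of_mem m (mem_univ k)),
    fun k hk => hnotMem _ ?_ (isTransversal_image_right hinj)
      (hk ▸ mem_image_of_mem m' (mem_univ k))⟩
  · simp [card_image_of_injective _ hm]
  · simp [card_image_of_injective _ hm']

lemma IsHarmonic.add_eq_zero (hf : IsHarmonic (i + 1) f) {a b : α} (hab : a ≠ b)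
    (hcover : ∀ x ∈ levelSupport (i + 1) f, a ∈ x ∨ b ∈ x) {S : Finset α} (hS : #S = i)
    (haS : a ∉ S) (hbS : b ∉ S) : f (insert a S) + f (insert b S) = 0 := by
  rw [← sum_pair (f := fun d => f (insert d S)) hab, ← hf S (by rw [hS])]
  refine sum_subset (by simp [insert_subset_iff, haS, hbS]) fun d hd hdab => ?_
  by_contra hfd
  have hdS := mem_compl.1 hd
  have := hcover _ (mem_levelSupport.2 ⟨by rw [card_insert_of_notMem hdS, hS], hfd⟩)
  simp only [mem_insert, mem_singleton, not_or] at this hdab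
  rcases this with (h | h) | (h | h)
  exacts [hdab.1 h.symm, haS h, hdab.2 h.symm, hbS h]

lemma xor_mem_of_mem_levelSupport {a b : α} (hcard : #(levelSupport (i + 1) f) = 2 ^ (i + 1))
    (hdega : #{x ∈ levelSupport (i + 1) f | a ∈ x} = 2 ^ i)
    (hdegb : #{x ∈ levelSupport (i + 1) f | b ∈ x} = 2 ^ i)
    (hinj : Function.Injective (Sum.elim m m')) (hc : c ≠ 0)
    (hlink : ∀ y, #y = i → link a f y = transversalFn m m' c y) (hab : a ≠ b)
    (hb : b ∉ univ.image (Sum.elim m m')) :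
    ∀ x ∈ levelSupport (i + 1) f, Xor (a ∈ x) (b ∈ x) := by
  have hnotboth : ∀ x ∈ levelSupport (i + 1) f, a ∈ x → b ∉ x := by
    intro x hx hax hbx
    have hy : x.erase a ∈ levelSupport i (link a f) :=
      mem_levelSupport_link.2 ⟨notMem_erase a x, by rwa [insert_erase hax]⟩
    obtain ⟨hyc, hyT⟩ := (mem_levelSupport_iff_isTransversal hc hlink).1 hy
    exact hb (hyT.subset hinj hyc (mem_erase.2 ⟨hab.symm, hbx⟩))
  have hcover := forall_or_of_card_le_card_filter_add hnotboth <| by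
    rw [hcard, hdega, hdegb, pow_succ]
    omega
  intro x hx
  rcases hcover x hx with h | h
  · exact .inl ⟨h, hnotboth x hx h⟩
  · exact .inr ⟨h, fun h' => hnotboth x hx h' h⟩

lemma isTransversalFn_succ (hf : IsHarmonic (i + 1) f)
    (hcard : #(levelSupport (i + 1) f) = 2 ^ (i + 1))
    (hV : #(supportVars (i + 1) f) = 2 * (i + 1))
    (hdeg : ∀ b ∈ supportVars (i + 1) f, #{x ∈ levelSupport (i + 1) f | b ∈ x} = 2 ^ i)
    (ha : a ∈ supportVars (i + 1) f) (hinj : Function.Injective (Sum.elim m m')) (hc : c ≠ 0)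
    (hlink : ∀ y, #y = i → link a f y = transversalFn m m' c y) :
    IsTransversalFn (i + 1) f := by
  have haW := notMem_image_sumElim_of_link hinj hc hlink
  obtain ⟨b, hbV, hbW⟩ :
      ∃ b ∈ supportVars (i + 1) f, b ∉ insert a (univ.image (Sum.elim m m')) := by
    refine exists_mem_notMem_of_card_lt_card ?_
    have := card_image_le (s := univ) (f := Sum.elim m m')
    rw [card_univ, Fintype.card_sum, Fintype.card_fin] at this
    have := card_insert_le a (univ.image (Sum.elim m m'))
    omega
  obtain ⟨hba, hbW⟩ := not_or.1 (mem_insert.not.1 hbW)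
  have hxor := xor_mem_of_mem_levelSupport hcard (hdeg a ha) (hdeg b hbV) hinj hc hlink
    (Ne.symm hba) hbW
  refine ⟨Fin.cons a m, Fin.cons b m', -c, injective_sumElim_cons hinj haW hbW (Ne.symm hba),
    neg_ne_zero.2 hc, fun x hx => ?_⟩
  by_cases hx' : Xor (a ∈ x) (b ∈ x)
  · rcases hx' with ⟨hax, hbx⟩ | ⟨hbx, hax⟩
    · rw [transversalFn_cons_of_mem_left hax hbx haW,
        ← hlink _ (by rw [card_erase_of_mem hax, hx, Nat.add_sub_cancel]), link_erase hax]
    · have hS : #(x.erase b) = i := by rw [card_erase_of_mem hbx, hx, Nat.add_sub_cancel]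
      have haS : a ∉ x.erase b := fun h => hax (mem_of_mem_erase h)
      have hpair := hf.add_eq_zero (Ne.symm hba) (fun y hy => (hxor y hy).or) hS haS
        (notMem_erase b x)
      rw [insert_erase hbx] at hpair
      rw [transversalFn_cons_of_mem_right hax hbx hbW, ← hlink _ hS, link, if_neg haS]
      linarith
  · rw [transversalFn_cons_of_not_xor hx']
    by_contra hfx
    exact hx' (hxor x (mem_levelSupport.2 ⟨hx, hfx⟩))

end Step

theorem IsHarmonic.isTransversalFn_of_card_levelSupport_eq (hf : IsHarmonic i f)
    (hcard : #(levelSupport i f) = 2 ^ i) : IsTransversalFn i f := by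
  induction i generalizing f with
  | zero =>
    obtain ⟨x, hx⟩ := card_eq_one.1 hcard
    obtain ⟨hxc, hfx⟩ := mem_levelSupport.1 (hx ▸ mem_singleton_self x)
    obtain rfl := card_eq_zero.1 hxc
    refine ⟨Fin.elim0, Fin.elim0, f ∅, Function.injective_of_subsingleton _, hfx,
      fun y hy => ?_⟩
    simp [card_eq_zero.1 hy, transversalFn, IsTransversal]
  | succ i ih =>
    obtain ⟨hV, hdeg⟩ := hf.card_supportVars_eq hcard
    obtain ⟨a, ha⟩ : (supportVars (i + 1) f).Nonempty := card_pos.1 (by omega)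
    obtain ⟨m, m', c, hinj, hc, hlink⟩ :=
      ih (hf.link a) (card_levelSupport_link.trans (hdeg a ha))
    exact isTransversalFn_succ hf hcard hV hdeg ha hinj hc hlink

end Fintype

end Johnson

theorem min_eigen_support_characterization_general (n i : ℕ)
    (f : Finset (Fin n) → ℝ)
    (hf : ∀ x : Finset (Fin n), x.card = i →
      ∑ y ∈ univ.filter (fun y : Finset (Fin n) => y.card = i ∧ (x ∩ y).card + 1 = i), f y
        = -(i : ℝ) * f x)
    (hsupp : (univ.filter (fun x : Finset (Fin n) => x.card = i ∧ f x ≠ 0)).card = 2 ^ i) :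
    ∃ (m m' : Fin i → Fin n) (c : ℝ), Function.Injective (Sum.elim m m') ∧ c ≠ 0 ∧
      ∀ x : Finset (Fin n), x.card = i →
        f x = if ∀ k : Fin i, Xor (m k ∈ x) (m' k ∈ x) then
            c * (-1 : ℝ) ^ ((x ∩ Finset.image m Finset.univ).card)
          else 0 :=
  (Johnson.isHarmonic_of_isEigenfunction_neg hf).isTransversalFn_of_card_levelSupport_eq hsupp

/-- If an eigenfunction of `J(n,i)` with eigenvalue `-i` has support of size exactly
`2^i`, then it is, up to a nonzero scalar, the function `f^{i,i,n}` obtained from some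
disjoint paired `i`-sets `M = {m 1,…,m i}`, `M' = {m' 1,…,m' i}`. -/
theorem min_eigen_support_characterization (n i : ℕ) (hi : 1 ≤ i) (hn : 2 * i ≤ n)
    (f : Finset (Fin n) → ℝ)
    (hne : ∃ x : Finset (Fin n), x.card = i ∧ f x ≠ 0)
    (hf : ∀ x : Finset (Fin n), x.card = i →
      ∑ y ∈ univ.filter (fun y : Finset (Fin n) => y.card = i ∧ (x ∩ y).card + 1 = i), f y
        = -(i : ℝ) * f x)
    (hsupp : (univ.filter (fun x : Finset (Fin n) => x.card = i ∧ f x ≠ 0)).card = 2 ^ i) :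
    ∃ (m m' : Fin i → Fin n) (c : ℝ), Function.Injective (Sum.elim m m') ∧ c ≠ 0 ∧
      ∀ x : Finset (Fin n), x.card = i →
        f x = if ∀ k : Fin i, Xor (m k ∈ x) (m' k ∈ x) then
            c * (-1 : ℝ) ^ ((x ∩ Finset.image m Finset.univ).card)
          else 0 :=
  min_eigen_support_characterization_general n i f hf hsupp
end

section
/- Let i ≤ w and n ≥ 3w. Suppose f is a nonzero function on w-subsets of {1,...,n} that is invariant under the value of the distribution of its elements in N_2 = {2w+1,...,n} (depends only on x ∩ {1,...,2w} and |x ∩ N_2|), and f is an eigenfunction of J(n,w) with eigenvalue (w-i)(n-w-i)-i. Define h on subsets z of {1,...,2w} with |z| ≤ w by h(z) = f(z ∪ {2w+1,...,3w-|z|}). Then for every subset z of {1,...,2w} with |z| = j ≤ w: ((w-i)(n-w-i)-i)·h(z) = Σ_{|z'|=j, |z ∩ z'|=j-1} h(z') + (n-3w+j)·Σ_{|z'|=j-1, z' ⊂ z} h(z') + (w-j)·Σ_{|z'|=j+1, z ⊂ z'} h(z') + (w-j)(n-3w+j)·h(z), where all z' range over subsets of {1,...,2w} and h is extended by 0 to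 sets of size > w. -/
/-!
Put `x = z ∪ B` with `B = {2w+1, …, 3w-|z|}`, so that `h z = f x`; since `f` only sees the part
of a `w`-set below `2w`, `f y = h (y ∩ {1, …, 2w})` for every `w`-set `y`. The neighbours of `x`
in `J(n,w)` are the sets `x - a + b` with `a ∈ x`, `b ∉ x`, and the low part of `x - a + b` is
`z - a + b`, where removing `a ∈ B` or adding `b > 2w` changes nothing. Splitting by `a ∈ z` or
`a ∈ B` and by `b ≤ 2w` or `b > 2w` gives the four terms: the `J(2w,j)`-neighbours `z - a + b` of
`z`; the sets `z - a`, each hit by the `n - 3w + j` high `b`; the sets `z + b`, each hit by the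
`w - j` elements `a ∈ B`; and `z` itself, hit `(w - j)(n - 3w + j)` times.
-/

open Finset

namespace Finset

section Exchange

variable {α M : Type*} [DecidableEq α] [AddCommMonoid M]

def johnsonNeighbors (U x : Finset α) : Finset (Finset α) :=
  U.powerset.filter fun y => #y = #x ∧ #(x ∩ y) + 1 = #x

theorem image_insert_erase_eq_johnsonNeighbors {U x : Finset α} (hx : x ⊆ U) :
    (x ×ˢ (U \ x)).image (fun ab => insert ab.2 (x.erase ab.1)) = johnsonNeighbors U x := by
  ext y
  simp only [mem_image, mem_product, mem_sdiff, johnsonNeighbors, mem_filter, mem_powerset,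
    Prod.exists]
  constructor
  · rintro ⟨a, b, ⟨ha, hbU, hbx⟩, rfl⟩
    have hbx' : b ∉ x.erase a := fun h => hbx (mem_of_mem_erase h)
    have hinter : x ∩ insert b (x.erase a) = x.erase a := by
      rw [inter_insert_of_notMem hbx, inter_eq_right.2 (erase_subset a x)]
    refine ⟨insert_subset hbU ((erase_subset a x).trans hx), ?_, ?_⟩
    · rw [card_insert_of_notMem hbx', card_erase_add_one ha]
    · rw [hinter, card_erase_add_one ha]
  · rintro ⟨hyU, hy, hxy⟩
    obtain ⟨a, ha⟩ : ∃ a, x \ y = {a} := card_eq_one.1 (by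
      have := card_inter_add_card_sdiff x y; omega)
    obtain ⟨b, hb⟩ : ∃ b, y \ x = {b} := card_eq_one.1 (by
      have := card_inter_add_card_sdiff y x; rw [inter_comm] at this; omega)
    have hax : a ∈ x \ y := ha ▸ mem_singleton_self a
    have hby : b ∈ y \ x := hb ▸ mem_singleton_self b
    refine ⟨a, b, ⟨(mem_sdiff.1 hax).1, hyU (mem_sdiff.1 hby).1, (mem_sdiff.1 hby).2⟩, ?_⟩
    simp only [Finset.ext_iff, mem_sdiff, mem_singleton] at ha hb
    ext c
    simp only [mem_insert, mem_erase]
    grind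

theorem sum_johnsonNeighbors {U x : Finset α} (hx : x ⊆ U) (F : Finset α → M) :
    ∑ y ∈ johnsonNeighbors U x, F y = ∑ a ∈ x, ∑ b ∈ U \ x, F (insert b (x.erase a)) := by
  rw [← image_insert_erase_eq_johnsonNeighbors hx, sum_image, sum_product]
  rintro ⟨a₁, b⟩ h₁ ⟨a₂, b₂⟩ h₂ heq
  simp only [coe_product, Set.mem_prod, mem_coe, mem_sdiff] at h₁ h₂ heq
  obtain rfl : b = b₂ := by
    have : b ∈ insert b₂ (x.erase a₂) := heq ▸ mem_insert_self b _
    grind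
  have hb : ∀ a, b ∉ x.erase a := fun a h => h₁.2.2 (mem_of_mem_erase h)
  have ha : x.erase a₁ = x.erase a₂ := by
    rw [← erase_insert (hb a₁), heq, erase_insert (hb a₂)]
  rw [erase_injOn x h₁.1 h₂.1 ha]

theorem sum_powerset_filter_subset_card_add_one_eq_sum_erase {U z : Finset α} (hz : z ⊆ U)
    (F : Finset α → M) :
    ∑ y ∈ U.powerset.filter (fun y => #y + 1 = #z ∧ y ⊆ z), F y = ∑ a ∈ z, F (z.erase a) := by
  rw [← sum_image (erase_injOn z)]
  congr 1
  ext y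
  simp only [mem_filter, mem_powerset, mem_image]
  constructor
  · rintro ⟨-, hy, hyz⟩
    obtain ⟨a, hay, rfl⟩ := exists_eq_insert_iff.2 ⟨hyz, hy⟩
    exact ⟨a, mem_insert_self a y, erase_insert hay⟩
  · rintro ⟨a, ha, rfl⟩
    exact ⟨(erase_subset a z).trans hz, card_erase_add_one ha, erase_subset a z⟩

theorem sum_powerset_filter_superset_card_eq_add_one_eq_sum_insert {U z : Finset α} (hz : z ⊆ U)
    (F : Finset α → M) :
    ∑ y ∈ U.powerset.filter (fun y => #y = #z + 1 ∧ z ⊆ y), F y = ∑ b ∈ U \ z, F (insert b z) := by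
  rw [← sum_image (fun b hb c hc h => (insert_inj (mem_sdiff.1 hb).2).1 h)]
  congr 1
  ext y
  simp only [mem_filter, mem_powerset, mem_image, mem_sdiff]
  constructor
  · rintro ⟨hyU, hy, hzy⟩
    obtain ⟨b, hbz, rfl⟩ := exists_eq_insert_iff.2 ⟨hzy, hy.symm⟩
    exact ⟨b, ⟨hyU (mem_insert_self b z), hbz⟩, rfl⟩
  · rintro ⟨b, ⟨hbU, hbz⟩, rfl⟩
    exact ⟨insert_subset hbU hz, card_insert_of_notMem hbz, subset_insert b z⟩

theorem sum_johnsonNeighbors_union_comp_filter [Fintype α] (p : α → Prop) [DecidablePred p]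
    {z B : Finset α} (hz : ∀ a ∈ z, p a) (hB : ∀ a ∈ B, ¬ p a) (φ : Finset α → M) :
    ∑ y ∈ johnsonNeighbors univ (z ∪ B), φ (y.filter p)
      = ∑ y ∈ johnsonNeighbors (univ.filter p) z, φ y
        + #(univ.filter (fun a => ¬ p a) \ B) • ∑ y ∈ (univ.filter p).powerset.filter
            (fun y => #y + 1 = #z ∧ y ⊆ z), φ y
        + #B • ∑ y ∈ (univ.filter p).powerset.filter (fun y => #y = #z + 1 ∧ z ⊆ y), φ y
        + (#B * #(univ.filter (fun a => ¬ p a) \ B)) • φ z := by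
  have hzP : z ⊆ univ.filter p := fun a ha => mem_filter.2 ⟨mem_univ a, hz a ha⟩
  have hdisj : Disjoint z B := disjoint_left.2 fun a ha hb => hB a hb (hz a ha)
  have hfilter : ∀ a b, (insert b ((z ∪ B).erase a)).filter p
      = if p b then insert b (z.erase a) else z.erase a := by
    intro a b
    rw [filter_insert, filter_erase, filter_union, filter_true_of_mem hz,
      filter_false_of_mem hB, union_empty]
  have hlow : (univ \ (z ∪ B)).filter p = univ.filter p \ z := by
    ext a
    have := hB a
    simp only [mem_filter, mem_sdiff, mem_univ, mem_union, true_and]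
    tauto
  have hhigh : (univ \ (z ∪ B)).filter (fun a => ¬ p a) = univ.filter (fun a => ¬ p a) \ B := by
    ext a
    have := hz a
    simp only [mem_filter, mem_sdiff, mem_univ, mem_union, true_and]
    tauto
  have hsum_B : ∀ c : ℕ, ∑ a ∈ B, (∑ b ∈ univ.filter p \ z, φ (insert b (z.erase a))
      + c • φ (z.erase a)) = #B • (∑ b ∈ univ.filter p \ z, φ (insert b z) + c • φ z) := by
    intro c
    rw [sum_congr rfl fun a ha => by rw [erase_eq_of_notMem fun h => hB a ha (hz a h)], sum_const]
  simp only [sum_johnsonNeighbors (subset_univ _), sum_johnsonNeighbors hzP, hfilter,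
    apply_ite φ, sum_ite, hlow, hhigh, sum_const]
  rw [sum_union hdisj, hsum_B, sum_add_distrib,
    sum_powerset_filter_subset_card_add_one_eq_sum_erase hzP,
    sum_powerset_filter_superset_card_eq_add_one_eq_sum_insert hzP, smul_sum, mul_smul, smul_add]
  abel

end Exchange

/-- The decidability instance is an argument so that the lemma rewrites whichever instance the
goal carries (for `α = Fin n` it is `Nat.decidableForallFin`, not `decidableDforallFinset`). -/
theorem filter_forall_mem_and_eq_powerset_filter {α : Type*} [Fintype α] (p : α → Prop)
    [DecidablePred p] (q : Finset α → Prop) [DecidablePred q]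
    [DecidablePred fun s : Finset α => (∀ a ∈ s, p a) ∧ q s] :
    univ.filter (fun s => (∀ a ∈ s, p a) ∧ q s) = (univ.filter p).powerset.filter q := by
  ext s
  simp [subset_iff]

theorem apply_eq_apply_filter_union_of_filter_invariant {α β : Type*} [DecidableEq α]
    {f : Finset α → β} {w : ℕ} (p : α → Prop) [DecidablePred p]
    (hinv : ∀ x₁ x₂ : Finset α, #x₁ = w → #x₂ = w → x₁.filter p = x₂.filter p → f x₁ = f x₂)
    (c : ℕ → Finset α) (hc_card : ∀ k ≤ w, #(c k) = w - k) (hc : ∀ k, ∀ a ∈ c k, ¬ p a)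
    {y : Finset α} (hy : #y = w) :
    f y = f (y.filter p ∪ c #(y.filter p)) := by
  have hk : #(y.filter p) ≤ w := hy ▸ card_filter_le y p
  have hdisj : Disjoint (y.filter p) (c #(y.filter p)) :=
    disjoint_left.2 fun a ha hca => hc _ a hca (mem_filter.1 ha).2
  refine hinv _ _ hy ?_ ?_
  · rw [card_union_of_disjoint hdisj, hc_card _ hk]
    omega
  · rw [filter_union, filter_filter, filter_false_of_mem (hc _), union_empty]
    simp

end Finset

theorem Fin.card_filter_le_val_and_val_lt {n : ℕ} (k m : ℕ) (hm : m ≤ n) :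
    #{a : Fin n | k ≤ (a : ℕ) ∧ (a : ℕ) < m} = m - k := by
  rw [← Nat.card_Ico, ← card_map Fin.valEmbedding]
  congr 1
  ext b
  simp only [mem_map, mem_filter, mem_univ, true_and, Fin.valEmbedding_apply, mem_Ico]
  exact ⟨by rintro ⟨a, ha, rfl⟩; exact ha, fun hb => ⟨⟨b, by omega⟩, hb, rfl⟩⟩

def paddingBlock (n w k : ℕ) : Finset (Fin n) :=
  {a : Fin n | 2 * w ≤ (a : ℕ) ∧ (a : ℕ) < 3 * w - k}

section PaddingBlock

variable {n w k : ℕ}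

theorem not_lt_of_mem_paddingBlock {a : Fin n} (ha : a ∈ paddingBlock n w k) :
    ¬ (a : ℕ) < 2 * w := by
  simp only [paddingBlock, mem_filter] at ha
  omega

theorem card_paddingBlock (hn : 3 * w ≤ n) (hk : k ≤ w) : #(paddingBlock n w k) = w - k := by
  rw [paddingBlock, Fin.card_filter_le_val_and_val_lt _ _ (by omega)]
  omega

theorem card_filter_not_lt_sdiff_paddingBlock (hk : k ≤ w) :
    #((univ.filter fun a : Fin n => ¬ (a : ℕ) < 2 * w) \ paddingBlock n w k) = n - (3 * w - k) := by
  have hset : (univ.filter fun a : Fin n => ¬ (a : ℕ) < 2 * w) \ paddingBlock n w k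
      = univ.filter fun a : Fin n => 3 * w - k ≤ (a : ℕ) ∧ (a : ℕ) < n := by
    ext a
    simp only [paddingBlock, mem_sdiff, mem_filter, mem_univ, true_and]
    omega
  rw [hset, Fin.card_filter_le_val_and_val_lt _ _ le_rfl]

end PaddingBlock

theorem restricted_eigen_equation_general (n i w : ℕ) (hn : 3 * w ≤ n)
    (f : Finset (Fin n) → ℝ)
    (hinv : ∀ x₁ x₂ : Finset (Fin n), x₁.card = w → x₂.card = w →
      x₁.filter (fun a : Fin n => (a : ℕ) < 2 * w) = x₂.filter (fun a : Fin n => (a : ℕ) < 2 * w) →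
      f x₁ = f x₂)
    (hf : ∀ x : Finset (Fin n), x.card = w →
      ∑ y ∈ univ.filter (fun y : Finset (Fin n) => y.card = w ∧ (x ∩ y).card + 1 = w), f y
        = (((w : ℝ) - i) * ((n : ℝ) - w - i) - i) * f x) :
    ∀ z : Finset (Fin n), (∀ a ∈ z, (a : ℕ) < 2 * w) → z.card ≤ w →
      (let h : Finset (Fin n) → ℝ := fun u =>
        if u.card ≤ w then
          f (u ∪ univ.filter (fun a : Fin n => 2 * w ≤ (a : ℕ) ∧ (a : ℕ) < 3 * w - u.card))
        else 0
      (((w : ℝ) - i) * ((n : ℝ) - w - i) - i) * h z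
        = (∑ z' ∈ univ.filter (fun z' : Finset (Fin n) =>
              (∀ a ∈ z', (a : ℕ) < 2 * w) ∧ z'.card = z.card ∧ (z ∩ z').card + 1 = z.card),
            h z')
        + ((n : ℝ) - 3 * w + z.card) *
            (∑ z' ∈ univ.filter (fun z' : Finset (Fin n) =>
              (∀ a ∈ z', (a : ℕ) < 2 * w) ∧ z'.card + 1 = z.card ∧ z' ⊆ z), h z')
        + ((w : ℝ) - z.card) *
            (∑ z' ∈ univ.filter (fun z' : Finset (Fin n) =>
              (∀ a ∈ z', (a : ℕ) < 2 * w) ∧ z'.card = z.card + 1 ∧ z ⊆ z'), h z')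
        + ((w : ℝ) - z.card) * ((n : ℝ) - 3 * w + z.card) * h z) := by
  intro z hz hzw h
  have hfh : ∀ y : Finset (Fin n), #y = w → f y = h (y.filter fun a : Fin n => (a : ℕ) < 2 * w) :=
    fun y hy => (apply_eq_apply_filter_union_of_filter_invariant _ hinv (paddingBlock n w)
      (fun _ => card_paddingBlock hn) (fun _ _ => not_lt_of_mem_paddingBlock) hy).trans
      (if_pos (hy ▸ card_filter_le y _)).symm
  have hdisj : Disjoint z (paddingBlock n w #z) :=
    disjoint_left.2 fun a ha hb => not_lt_of_mem_paddingBlock hb (hz a ha)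
  have hx : #(z ∪ paddingBlock n w #z) = w := by
    rw [card_union_of_disjoint hdisj, card_paddingBlock hn hzw]
    omega
  have hN : univ.filter (fun y : Finset (Fin n) =>
      y.card = w ∧ ((z ∪ paddingBlock n w #z) ∩ y).card + 1 = w)
      = johnsonNeighbors univ (z ∪ paddingBlock n w #z) := by
    rw [johnsonNeighbors, powerset_univ, hx]
  conv_lhs => rw [show h z = f (z ∪ paddingBlock n w #z) from if_pos hzw, ← hf _ hx, hN]
  rw [sum_congr rfl fun y hy => hfh y ((mem_filter.1 hy).2.1.trans hx),
    sum_johnsonNeighbors_union_comp_filter _ hz fun _ => not_lt_of_mem_paddingBlock,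
    card_paddingBlock hn hzw, card_filter_not_lt_sdiff_paddingBlock hzw]
  simp only [filter_forall_mem_and_eq_powerset_filter, johnsonNeighbors, nsmul_eq_mul,
    Nat.cast_mul, Nat.cast_sub hzw, Nat.cast_sub (by omega : 3 * w - #z ≤ n),
    Nat.cast_sub (by omega : #z ≤ 3 * w)]
  push_cast
  ring

/-- The local equation satisfied by `h(z) = f(z ∪ {2w+1,…,3w-|z|})` when `f` is a
`λ_i(n,w)`-eigenfunction of `J(n,w)` (with `i ≤ w`, `n ≥ 3w`) that depends only on
`x ∩ {1,…,2w}` (coordinates of `Fin n` with value `< 2w`). Here `h` is extended by `0`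
to subsets of `{1,…,2w}` of size `> w`, and the block `{2w+1,…,3w-|z|}` is the set of
coordinates with values in `[2w, 3w - |z|)`. -/
theorem restricted_eigen_equation (n i w : ℕ) (hiw : i ≤ w) (hn : 3 * w ≤ n)
    (f : Finset (Fin n) → ℝ)
    (hne : ∃ x : Finset (Fin n), x.card = w ∧ f x ≠ 0)
    (hinv : ∀ x₁ x₂ : Finset (Fin n), x₁.card = w → x₂.card = w →
      x₁.filter (fun a : Fin n => (a : ℕ) < 2 * w) = x₂.filter (fun a : Fin n => (a : ℕ) < 2 * w) →
      f x₁ = f x₂)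
    (hf : ∀ x : Finset (Fin n), x.card = w →
      ∑ y ∈ univ.filter (fun y : Finset (Fin n) => y.card = w ∧ (x ∩ y).card + 1 = w), f y
        = (((w : ℝ) - i) * ((n : ℝ) - w - i) - i) * f x) :
    ∀ z : Finset (Fin n), (∀ a ∈ z, (a : ℕ) < 2 * w) → z.card ≤ w →
      (let h : Finset (Fin n) → ℝ := fun u =>
        if u.card ≤ w then
          f (u ∪ univ.filter (fun a : Fin n => 2 * w ≤ (a : ℕ) ∧ (a : ℕ) < 3 * w - u.card))
        else 0
      (((w : ℝ) - i) * ((n : ℝ) - w - i) - i) * h z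
        = (∑ z' ∈ univ.filter (fun z' : Finset (Fin n) =>
              (∀ a ∈ z', (a : ℕ) < 2 * w) ∧ z'.card = z.card ∧ (z ∩ z').card + 1 = z.card),
            h z')
        + ((n : ℝ) - 3 * w + z.card) *
            (∑ z' ∈ univ.filter (fun z' : Finset (Fin n) =>
              (∀ a ∈ z', (a : ℕ) < 2 * w) ∧ z'.card + 1 = z.card ∧ z' ⊆ z), h z')
        + ((w : ℝ) - z.card) *
            (∑ z' ∈ univ.filter (fun z' : Finset (Fin n) =>
              (∀ a ∈ z', (a : ℕ) < 2 * w) ∧ z'.card = z.card + 1 ∧ z ⊆ z'), h z')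
        + ((w : ℝ) - z.card) * ((n : ℝ) - 3 * w + z.card) * h z) :=
  restricted_eigen_equation_general n i w hn f hinv hf
end
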